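/- arXiv:1712.02759 — 9 statements merged into one kernel-verified Lean document; each statement's English description precedes it below -/
import Mathlib

section
/- If A ⊂ ℝⁿ is an open bounded convex set whose barycenter lies at the origin, and f : ℝⁿ → ℝ is a convex function whose Legendre transform f* satisfies ∫_A f* dλ = -τ < ∞, then f(x) ≥ τ/λ(A) for all x ∈ ℝⁿ. -/
open MeasureTheory

/-!
Integrate the Fenchel–Young inequality `⟪x, y⟫ - f x ≤ f* y` over `y ∈ A`. The linear term
integrates to `⟪x, ∫_A y⟫ = 0` because the barycenter of `A` is the origin, so
`-f x · λ(A) ≤ ∫_A f* = -τ`.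
-/

theorem Bornology.IsBounded.integrableOn_id {E : Type*} [NormedAddCommGroup E] [ProperSpace E]
    [MeasurableSpace E] [OpensMeasurableSpace E] {μ : Measure E} [IsFiniteMeasureOnCompacts μ]
    {s : Set E} (hbdd : Bornology.IsBounded s) : IntegrableOn (fun y => y) s μ :=
  (continuous_id'.continuousOn.integrableOn_compact hbdd.isCompact_closure).mono_set subset_closure

section Barycenter

variable {E : Type*} [NormedAddCommGroup E] [InnerProductSpace ℝ E] [CompleteSpace E]
  [MeasurableSpace E] {μ : Measure E} {s : Set E}

theorem setIntegral_inner_sub_const_of_setIntegral_id_eq_zero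
    (hid : IntegrableOn (fun y => y) s μ) (hbar : ∫ y in s, y ∂μ = 0) (hs : μ s ≠ ⊤)
    (x : E) (c : ℝ) :
    ∫ y in s, (inner ℝ x y - c) ∂μ = -(c * μ.real s) := by
  have hinner_int : IntegrableOn (fun y => inner ℝ x y) s μ := hid.const_inner x
  have hinner : ∫ y in s, inner ℝ x y ∂μ = 0 := by
    rw [integral_inner hid, hbar, inner_zero_right]
  rw [integral_sub hinner_int (integrableOn_const hs), hinner, setIntegral_const, smul_eq_mul,
    zero_sub, mul_comm]

theorem neg_setIntegral_le_mul_measureReal_of_inner_sub_le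
    (hmeas : MeasurableSet s) (hid : IntegrableOn (fun y => y) s μ)
    (hbar : ∫ y in s, y ∂μ = 0) (hs : μ s ≠ ⊤) {φ : E → ℝ} (hφ : IntegrableOn φ s μ)
    {x : E} {c : ℝ}
    (hle : ∀ y ∈ s, inner ℝ x y - c ≤ φ y) :
    -∫ y in s, φ y ∂μ ≤ c * μ.real s := by
  have hint : IntegrableOn (fun y => inner ℝ x y - c) s μ :=
    (hid.const_inner x).sub (integrableOn_const hs)
  have hmono : ∫ y in s, (inner ℝ x y - c) ∂μ ≤ ∫ y in s, φ y ∂μ :=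
    setIntegral_mono_on hint hφ hmeas hle
  rw [setIntegral_inner_sub_const_of_setIntegral_id_eq_zero hid hbar hs] at hmono
  linarith

end Barycenter

theorem stmt0_general {n : ℕ} (A : Set (EuclideanSpace ℝ (Fin n)))
    (hA : A.Nonempty) (hopen : IsOpen A) (hbdd : Bornology.IsBounded A)
    (hbar : ∫ y in A, y = (0 : EuclideanSpace ℝ (Fin n)))
    (f fstar : EuclideanSpace ℝ (Fin n) → ℝ)
    (hfstar : ∀ y ∈ A, IsLUB {z : ℝ | ∃ x, z = (inner ℝ x y : ℝ) - f x} (fstar y))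
    (τ : ℝ) (hint : IntegrableOn fstar A)
    (heq : ∫ y in A, fstar y = -τ) :
    ∀ x, τ / (volume A).toReal ≤ f x := by
  intro x
  have hvol : 0 < volume.real A :=
    ENNReal.toReal_pos (hopen.measure_pos volume hA).ne' hbdd.measure_lt_top.ne
  have key := neg_setIntegral_le_mul_measureReal_of_inner_sub_le hopen.measurableSet
    hbdd.integrableOn_id hbar hbdd.measure_lt_top.ne hint (fun y hy => (hfstar y hy).1 ⟨x, rfl⟩)
  rw [heq, neg_neg] at key
  rwa [← measureReal_def, div_le_iff₀ hvol]

/-- If `A ⊂ ℝⁿ` is an open bounded convex set with barycenter at the origin, and `f` is a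
convex function whose Legendre transform `fstar` satisfies `∫_A fstar = -τ`, then
`f x ≥ τ / λ(A)` for all `x`. -/
theorem stmt0 {n : ℕ} (A : Set (EuclideanSpace ℝ (Fin n)))
    (hA : A.Nonempty) (hopen : IsOpen A) (hbdd : Bornology.IsBounded A)
    (hconv : Convex ℝ A)
    (hbar : ∫ y in A, y = (0 : EuclideanSpace ℝ (Fin n)))
    (f fstar : EuclideanSpace ℝ (Fin n) → ℝ)
    (hf : ConvexOn ℝ Set.univ f)
    (hfstar : ∀ y ∈ A, IsLUB {z : ℝ | ∃ x, z = (inner ℝ x y : ℝ) - f x} (fstar y))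
    (τ : ℝ) (hint : IntegrableOn fstar A)
    (heq : ∫ y in A, fstar y = -τ) :
    ∀ x, τ / (volume A).toReal ≤ f x :=
  stmt0_general A hA hopen hbdd hbar f fstar hfstar τ hint heq
end

section
/- Let A ⊂ ℝⁿ be a convex set with the origin in its interior. There exists r > 0 depending only on A such that: for every convex integrable function ψ : A → ℝ with ψ(0) = inf ψ and ∫_A ψ dλ ≤ 0, one has ψ(y) ≤ ψ(0)/2 whenever |y| ≤ r. -/
/-!
Choose `ρ > 0` with `ball 0 ρ ⊆ A` and let `m = ψ 0`. Averaging the midpoint inequality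
`2 ψ q ≤ ψ (q + w) + ψ (q - w)` over a ball `B ⊆ A` centred at `q` gives, for every constant
`c ≤ ψ`, `|B| (ψ q - c) ≤ ∫_A ψ - c |A| ≤ -c |A|`. Taking `c = 0` rules out `m > 0`; taking `c = m`
and `‖q‖ = ρ / 2` bounds `ψ q - m` by `|m| |A| / |B|`, and convexity along the segment `[0, q]`
brings `ψ` down to `m / 2` on the ball of radius `r = ρ |B| / (4 (|B| + |A|))`.

For `c = m < 0` this needs `|A| < ∞`. As `ψ` is integrable, `A ∩ {|ψ| ≥ ε}` has finite measure for
every `ε > 0`, and the homothety of ratio `1 / 2` about `0`, which scales measure by `2⁻ⁿ`, maps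
`A ∩ {|ψ| < |m| / 2}` into `A ∩ {|ψ| ≥ |m| / 4}`.
-/

open MeasureTheory Metric Set

theorem measureReal_ball_pos {X : Type*} [PseudoMetricSpace X] [ProperSpace X] [MeasurableSpace X]
    (μ : Measure X) [μ.IsOpenPosMeasure] [IsFiniteMeasureOnCompacts μ] (x : X) {r : ℝ}
    (hr : 0 < r) : 0 < μ.real (ball x r) :=
  ENNReal.toReal_pos (measure_ball_pos μ x hr).ne' measure_ball_lt_top.ne

section

variable {E : Type*} [NormedAddCommGroup E] [NormedSpace ℝ E] [MeasurableSpace E] [BorelSpace E]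
  [FiniteDimensional ℝ E] (μ : Measure E) [μ.IsAddHaarMeasure] {A : Set E} {ψ : E → ℝ}

theorem ConvexOn.measureReal_ball_mul_le_setIntegral (hψ : ConvexOn ℝ A ψ) {q : E} {δ : ℝ}
    (hB : ball q δ ⊆ A) (hint : IntegrableOn ψ (ball q δ) μ) :
    μ.real (ball q δ) * ψ q ≤ ∫ x in ball q δ, ψ x ∂μ := by
  set σ : E → E := fun x => (q + q) - x
  have hσ : MeasurePreserving σ μ μ := Measure.measurePreserving_sub_left μ (q + q)
  have hσemb : MeasurableEmbedding σ := (MeasurableEquiv.subLeft (q + q)).measurableEmbedding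
  have hpre : σ ⁻¹' ball q δ = ball q δ := by
    ext x
    simp only [σ, mem_preimage, mem_ball, dist_eq_norm]
    rw [show q + q - x - q = -(x - q) by abel, norm_neg]
  have hint_σ : IntegrableOn (fun x => ψ (σ x)) (ball q δ) μ := by
    have := (hσ.integrableOn_comp_preimage hσemb (f := ψ) (s := ball q δ)).mpr hint
    rwa [hpre] at this
  have hrefl : ∫ x in ball q δ, ψ (σ x) ∂μ = ∫ x in ball q δ, ψ x ∂μ := by
    simpa only [hpre] using hσ.setIntegral_preimage_emb hσemb ψ (ball q δ)
  have hmid : ∀ x ∈ ball q δ, 2 * ψ q ≤ ψ x + ψ (σ x) := by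
    intro x hx
    have hσx : σ x ∈ ball q δ := by rwa [← hpre] at hx
    have := hψ.2 (hB hx) (hB hσx) (by norm_num : (0 : ℝ) ≤ 1 / 2) (by norm_num : (0 : ℝ) ≤ 1 / 2)
      (by norm_num)
    rw [show (1 / 2 : ℝ) • x + (1 / 2 : ℝ) • σ x = q by simp only [σ]; module] at this
    simp only [smul_eq_mul] at this
    linarith
  have hsum : ∫ _ in ball q δ, 2 * ψ q ∂μ ≤ ∫ x in ball q δ, (ψ x + ψ (σ x)) ∂μ :=
    setIntegral_mono_on (integrableOn_const measure_ball_lt_top.ne) (hint.add hint_σ)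
      measurableSet_ball hmid
  rw [setIntegral_const, integral_add hint hint_σ, hrefl, smul_eq_mul] at hsum
  linarith

theorem ConvexOn.measure_lt_top_of_integrableOn_of_neg (hψ : ConvexOn ℝ A ψ)
    (hint : IntegrableOn ψ A μ) {x₀ : E} (hx₀ : x₀ ∈ A) (hneg : ψ x₀ < 0) : μ A < ⊤ := by
  set c := ψ x₀
  have hlarge : ∀ ε > 0, μ ({x | ε ≤ ‖ψ x‖} ∩ A) < ⊤ := fun ε hε =>
    (Measure.le_restrict_apply _ _).trans_lt (hint.measure_norm_ge_lt_top hε)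
  set T := {x | ‖ψ x‖ < -c / 2} ∩ A
  have hcover : A ⊆ T ∪ ({x | -c / 2 ≤ ‖ψ x‖} ∩ A) := fun x hx => by
    by_cases h : ‖ψ x‖ < -c / 2
    · exact Or.inl ⟨h, hx⟩
    · exact Or.inr ⟨not_lt.mp h, hx⟩
  have hhalf : AffineMap.homothety x₀ (1 / 2 : ℝ) '' T ⊆ {x | -c / 4 ≤ ‖ψ x‖} ∩ A := by
    rintro _ ⟨x, ⟨hxT, hxA⟩, rfl⟩
    have hmid : AffineMap.homothety x₀ (1 / 2 : ℝ) x = (1 / 2 : ℝ) • x₀ + (1 / 2 : ℝ) • x := by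
      rw [AffineMap.homothety_apply, vsub_eq_sub, vadd_eq_add]; module
    have hle := hψ.2 hx₀ hxA (by norm_num : (0 : ℝ) ≤ 1 / 2) (by norm_num : (0 : ℝ) ≤ 1 / 2)
      (by norm_num)
    rw [← hmid, smul_eq_mul, smul_eq_mul] at hle
    have hx : ψ x < -c / 2 := (le_abs_self _).trans_lt hxT
    refine ⟨?_, hmid ▸ hψ.1 hx₀ hxA (by norm_num) (by norm_num) (by norm_num)⟩
    show -c / 4 ≤ ‖ψ _‖
    rw [Real.norm_eq_abs]
    linarith [neg_abs_le (ψ (AffineMap.homothety x₀ (1 / 2 : ℝ) x))]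
  have hT : μ T < ⊤ := by
    have himage := (measure_mono hhalf).trans_lt (hlarge (-c / 4) (by linarith))
    rw [Measure.addHaar_image_homothety] at himage
    refine lt_top_iff_ne_top.2 fun htop => himage.ne ?_
    rw [htop, ENNReal.mul_top (by positivity)]
  exact (measure_mono hcover).trans_lt
    ((measure_union_le _ _).trans_lt (ENNReal.add_lt_top.2 ⟨hT, hlarge _ (by linarith)⟩))

theorem ConvexOn.measureReal_ball_mul_sub_le (hψ : ConvexOn ℝ A ψ) (hint : IntegrableOn ψ A μ)
    {c : ℝ} (hc : IntegrableOn (fun _ => c) A μ) (hle : ∀ x ∈ A, c ≤ ψ x) {q : E} {δ : ℝ}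
    (hB : ball q δ ⊆ A) :
    μ.real (ball q δ) * (ψ q - c) ≤ ∫ x in A, ψ x ∂μ - c * μ.real A := by
  have hint_c : IntegrableOn (fun x => ψ x - c) A μ := hint.sub hc
  calc μ.real (ball q δ) * (ψ q - c)
      ≤ ∫ x in ball q δ, (ψ x - c) ∂μ :=
        (hψ.add_const (-c)).measureReal_ball_mul_le_setIntegral μ hB (hint_c.mono_set hB)
    _ ≤ ∫ x in A, (ψ x - c) ∂μ :=
        setIntegral_mono_set hint_c
          ((ae_restrict_mem₀ (hψ.1.nullMeasurableSet μ)).mono fun x hx => sub_nonneg.2 (hle x hx))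
          hB.eventuallyLE
    _ = ∫ x in A, ψ x ∂μ - c * μ.real A := by
        rw [integral_sub hint hc, setIntegral_const, smul_eq_mul, mul_comm]

end

theorem stmt3_general {n : ℕ} (A : Set (EuclideanSpace ℝ (Fin n)))
    (h0 : (0 : EuclideanSpace ℝ (Fin n)) ∈ interior A) :
    ∃ r > (0 : ℝ), ∀ ψ : EuclideanSpace ℝ (Fin n) → ℝ,
      ConvexOn ℝ A ψ → IntegrableOn ψ A →
      (∀ y ∈ A, ψ 0 ≤ ψ y) → (∫ y in A, ψ y) ≤ 0 →
      ∀ y ∈ A, ‖y‖ ≤ r → ψ y ≤ ψ 0 / 2 := by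
  obtain ⟨ρ, hρ, hball⟩ := Metric.mem_nhds_iff.mp (mem_interior_iff_mem_nhds.mp h0)
  set v := volume.real (ball (0 : EuclideanSpace ℝ (Fin n)) (ρ / 2))
  set vA := volume.real A
  have hv : 0 < v := measureReal_ball_pos volume 0 (by positivity)
  have hvA : 0 ≤ vA := measureReal_nonneg
  refine ⟨ρ * v / (4 * (v + vA)), by positivity, fun ψ hψ hint hmin hnonpos y _ hy => ?_⟩
  set m := ψ 0
  have hm : m ≤ 0 := by
    by_contra! hpos
    have h := hψ.measureReal_ball_mul_sub_le volume hint integrableOn_zero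
      (fun x hx => hpos.le.trans (hmin x hx)) hball
    rw [sub_zero, zero_mul, sub_zero] at h
    linarith [mul_pos (measureReal_ball_pos volume (0 : EuclideanSpace ℝ (Fin n)) hρ) hpos]
  have hc : IntegrableOn (fun _ => m) A := by
    rcases hm.lt_or_eq with hlt | heq
    · exact integrableOn_const
        (hψ.measure_lt_top_of_integrableOn_of_neg volume hint (interior_subset h0) hlt).ne
    · simp [heq]
  rcases eq_or_ne y 0 with rfl | hy0
  · linarith
  set t := 2 * ‖y‖ / ρ
  have ht0 : 0 < t := by positivity
  have ht : t * (2 * (v + vA)) ≤ v := by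
    rw [div_mul_eq_mul_div, div_le_iff₀ hρ]
    rw [le_div_iff₀ (by positivity)] at hy
    linarith
  have ht1 : t ≤ 1 := by nlinarith [mul_nonneg ht0.le hvA]
  have htvA : t * vA ≤ v / 2 := by nlinarith [mul_nonneg ht0.le hv.le]
  set q := t⁻¹ • y
  have hq : ball q (ρ / 2) ⊆ A := by
    refine (ball_subset_ball' ?_).trans hball
    rw [dist_zero_right, norm_smul, norm_inv, Real.norm_of_nonneg ht0.le]
    simp only [t]
    field_simp
    norm_num
  have hq_bound : v * (ψ q - m) ≤ -m * vA := by
    have h := hψ.measureReal_ball_mul_sub_le volume hint hc hmin hq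
    rw [Measure.addHaar_real_ball_center] at h
    linarith
  have hy_le : ψ y ≤ t * ψ q + (1 - t) * m := by
    have h := hψ.2 (hq (mem_ball_self (by positivity))) (interior_subset h0) ht0.le
      (sub_nonneg.2 ht1) (by ring)
    rwa [smul_inv_smul₀ ht0.ne', smul_zero, add_zero, smul_eq_mul, smul_eq_mul] at h
  have h : v * (ψ y - m) ≤ v * (-m / 2) := calc
    v * (ψ y - m) ≤ t * (v * (ψ q - m)) := by nlinarith
    _ ≤ t * (-m * vA) := mul_le_mul_of_nonneg_left hq_bound ht0.le
    _ = -m * (t * vA) := by ring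
    _ ≤ -m * (v / 2) := mul_le_mul_of_nonneg_left htvA (neg_nonneg.2 hm)
    _ = v * (-m / 2) := by ring
  linarith [le_of_mul_le_mul_left h hv]

/-- Klartag's lemma: if `A` is convex with the origin in its interior, then there is
`r > 0` depending only on `A` such that every integrable convex `ψ : A → ℝ` with
`ψ 0 = inf ψ` and `∫_A ψ ≤ 0` satisfies `ψ y ≤ ψ 0 / 2` whenever `‖y‖ ≤ r`. -/
theorem stmt3 {n : ℕ} (A : Set (EuclideanSpace ℝ (Fin n)))
    (hconv : Convex ℝ A) (h0 : (0 : EuclideanSpace ℝ (Fin n)) ∈ interior A) :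
    ∃ r > (0 : ℝ), ∀ ψ : EuclideanSpace ℝ (Fin n) → ℝ,
      ConvexOn ℝ A ψ → IntegrableOn ψ A →
      (∀ y ∈ A, ψ 0 ≤ ψ y) → (∫ y in A, ψ y) ≤ 0 →
      ∀ y ∈ A, ‖y‖ ≤ r → ψ y ≤ ψ 0 / 2 :=
  stmt3_general A h0
end

section
/- Let A ⊂ ℝⁿ be convex with λ(A) finite and positive, and for ε > 0 let A_ε = {y : B_ε(y) ⊂ A}. There exists C > 0, depending only on ε and λ(A), with the following property: for any convex ψ : A → ℝ with ∫_A ψ dλ ≤ 0, one has ψ(y) ≤ -C · inf_A ψ for all y ∈ A_ε. -/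
/-!
Let `K` be the closed ball of radius `ε / 2` about `y`; it lies in `A`. Since `K` is symmetric
about `y`, its barycenter is `y`, so Jensen's inequality gives `ψ y ≤ ⨍_K ψ`. On the other hand
`m λ(A) ≤ ∫_A ψ ≤ 0` forces `m ≤ 0`, and then
`∫_K ψ = ∫_A ψ - ∫_{A \ K} ψ ≤ -m λ(A \ K) ≤ -m λ(A)`.
Hence one may take `C = λ(A) / λ(B_{ε/2})`.
-/

open MeasureTheory Metric Set

theorem setIntegral_le_neg_mul_measureReal {α : Type*} [MeasurableSpace α] {ν : Measure α}
    {A K : Set α} {ψ : α → ℝ} {m : ℝ} (hA : NullMeasurableSet A ν) (hApos : 0 < ν A)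
    (hAfin : ν A ≠ ⊤) (hK : MeasurableSet K) (hKA : K ⊆ A) (hint : IntegrableOn ψ A ν)
    (hm : ∀ x ∈ A, m ≤ ψ x) (hψA : ∫ x in A, ψ x ∂ν ≤ 0) :
    ∫ x in K, ψ x ∂ν ≤ -m * ν.real A := by
  have hlower (s : Set α) (hsA : s ⊆ A) (hs : NullMeasurableSet s ν) :
      m * ν.real s ≤ ∫ x in s, ψ x ∂ν :=
    calc m * ν.real s = ∫ _ in s, m ∂ν := by rw [setIntegral_const, smul_eq_mul, mul_comm]
      _ ≤ ∫ x in s, ψ x ∂ν :=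
        setIntegral_mono_on₀ (integrableOn_const ((measure_mono hsA).trans_lt hAfin.lt_top).ne)
          (hint.mono_set hsA) hs fun x hx => hm x (hsA hx)
  have hm0 : m ≤ 0 :=
    nonpos_of_mul_nonpos_left ((hlower A subset_rfl hA).trans hψA)
      (ENNReal.toReal_pos hApos.ne' hAfin)
  have hrest := hlower (A \ K) sdiff_subset (hA.diff hK.nullMeasurableSet)
  rw [setIntegral_sdiff₀ hK.nullMeasurableSet hint hKA] at hrest
  nlinarith [measureReal_mono (μ := ν) (sdiff_subset : A \ K ⊆ A) hAfin]

variable {E : Type*} [NormedAddCommGroup E] [NormedSpace ℝ E] [FiniteDimensional ℝ E]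
  [MeasurableSpace E] (μ : Measure E) [μ.IsAddHaarMeasure]

theorem measureReal_closedBall_pos (y : E) {r : ℝ} (hr : 0 < r) : 0 < μ.real (closedBall y r) :=
  ENNReal.toReal_pos (measure_closedBall_pos μ y hr).ne' measure_closedBall_lt_top.ne

variable [BorelSpace E]

theorem setIntegral_closedBall_id (y : E) (r : ℝ) :
    ∫ x in closedBall y r, x ∂μ = μ.real (closedBall y r) • y := by
  set K := closedBall y r
  have hid : IntegrableOn (fun x : E => x) K μ :=
    continuous_id.continuousOn.integrableOn_compact (isCompact_closedBall y r)
  have hconst : IntegrableOn (fun _ => (2 : ℝ) • y) K μ :=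
    integrableOn_const measure_closedBall_lt_top.ne
  have hreflect : ∫ x in K, ((2 : ℝ) • y - x) ∂μ = ∫ x in K, x ∂μ := by
    have hK : (fun x : E => (2 : ℝ) • y - x) ⁻¹' K = K := by
      ext x
      simp only [K, mem_preimage, mem_closedBall, dist_eq_norm, two_smul, ← norm_neg (x - y)]
      congr! 2; abel
    simpa [hK] using (Measure.measurePreserving_sub_left μ ((2 : ℝ) • y)).setIntegral_preimage_emb
      (MeasurableEquiv.subLeft ((2 : ℝ) • y)).measurableEmbedding id K
  rw [integral_sub hconst hid, setIntegral_const] at hreflect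
  linear_combination (norm := module) (-1 / 2 : ℝ) • hreflect

theorem setAverage_closedBall_id (y : E) {r : ℝ} (hr : 0 < r) :
    ⨍ x in closedBall y r, x ∂μ = y := by
  rw [setAverage_eq, setIntegral_closedBall_id, smul_smul,
    inv_mul_cancel₀ (measureReal_closedBall_pos μ y hr).ne', one_smul]

theorem ConvexOn.le_setAverage_closedBall {ψ : E → ℝ} {y : E} {r ε : ℝ}
    (hψ : ConvexOn ℝ (ball y ε) ψ) (hr : 0 < r) (hrε : r < ε) :
    ψ y ≤ ⨍ x in closedBall y r, ψ x ∂μ := by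
  have hcont : ContinuousOn ψ (closedBall y r) :=
    (hψ.continuousOn isOpen_ball).mono (closedBall_subset_ball hrε)
  have := (hψ.subset (closedBall_subset_ball hrε) (convex_closedBall y r)).map_set_average_le
    hcont isClosed_closedBall (measure_closedBall_pos μ y hr).ne' measure_closedBall_lt_top.ne
    (ae_restrict_mem measurableSet_closedBall)
    (continuous_id.continuousOn.integrableOn_compact (isCompact_closedBall y r))
    (hcont.integrableOn_compact (isCompact_closedBall y r))
  rwa [setAverage_closedBall_id μ y hr] at this

/-- For `A` convex with finite positive volume and `ε > 0`, there exists `C > 0`,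
depending only on `ε` and `λ(A)`, such that every convex `ψ : A → ℝ` with
`∫_A ψ ≤ 0` satisfies `ψ y ≤ -C · inf_A ψ` for all `y ∈ A_ε = {y : B_ε(y) ⊆ A}`. -/
theorem stmt4 {n : ℕ} (A : Set (EuclideanSpace ℝ (Fin n)))
    (hconv : Convex ℝ A) (hpos : 0 < volume A) (hfin : volume A < ⊤)
    (ε : ℝ) (hε : 0 < ε) :
    ∃ C > (0 : ℝ), ∀ ψ : EuclideanSpace ℝ (Fin n) → ℝ,
      ConvexOn ℝ A ψ → IntegrableOn ψ A → (∫ y in A, ψ y) ≤ 0 →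
      ∀ m : ℝ, IsGLB (ψ '' A) m →
      ∀ y, Metric.ball y ε ⊆ A → ψ y ≤ -C * m := by
  set r := ε / 2
  have hr : 0 < r := half_pos hε
  refine ⟨volume.real A / volume.real (closedBall (0 : EuclideanSpace ℝ (Fin n)) r),
    div_pos (ENNReal.toReal_pos hpos.ne' hfin.ne) (measureReal_closedBall_pos volume 0 hr), ?_⟩
  intro ψ hψ hint hψA m hm y hy
  have hKA : closedBall y r ⊆ A := (closedBall_subset_ball (half_lt_self hε)).trans hy
  calc ψ y ≤ ⨍ x in closedBall y r, ψ x :=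
        (hψ.subset hy (convex_ball y ε)).le_setAverage_closedBall volume hr (half_lt_self hε)
    _ = (volume.real (closedBall y r))⁻¹ * ∫ x in closedBall y r, ψ x := by
        rw [setAverage_eq, smul_eq_mul]
    _ ≤ (volume.real (closedBall y r))⁻¹ * (-m * volume.real A) := by
        gcongr
        exact setIntegral_le_neg_mul_measureReal (hconv.nullMeasurableSet volume) hpos hfin.ne
          measurableSet_closedBall hKA hint (fun x hx => hm.1 (mem_image_of_mem ψ hx)) hψA
    _ = _ := by
        rw [Measure.addHaar_real_closedBall_center]
        ring
end

section
/- Let A ⊂ ℝⁿ be an open bounded convex set with barycenter at the origin. Let f be convex with inf f = f(0) and ∫_A f* dλ = -τ. Then there exists r > 0 depending only on A such that f(x) ≥ (1/2)(f(0) + τ/λ(A)) + r|x| ≥ τ/λ(A) + r|x| for all x ∈ ℝⁿ. -/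
open MeasureTheory Metric
open scoped RealInnerProductSpace

/-!
Testing the Fenchel–Young inequality `⟪x, y⟫ - f x ≤ f* y` against the weight `1 + ⟪u, y⟫`,
which is nonnegative on `A ⊆ closedBall 0 R` when `‖u‖ ≤ 1 / R` and has integral `λ(A)` because
the barycenter of `A` is `0`, gives `∫_A ⟪x, y⟫ ⟪u, y⟫ ≤ (f x + f 0) λ(A) - 2τ`; the term
`f* y ⟪u, y⟫` is controlled by `f* ≥ -f 0`. The quadratic form `u ↦ ∫_A ⟪u, y⟫²` is positive
definite because `A` is open, hence `≥ c ‖u‖²` by compactness of the unit sphere, and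
`u = x / (R ‖x‖)` turns the left side into at least `(c / R) ‖x‖`.
-/

section Legendre

variable {E : Type*} [NormedAddCommGroup E] [InnerProductSpace ℝ E] [MeasurableSpace E]
  {μ : Measure E} [IsFiniteMeasure μ] {f g : E → ℝ}

theorem neg_mul_measureReal_univ_le_integral (hg_int : Integrable g μ)
    (hg : ∀ᵐ y ∂μ, ∀ x, ⟪x, y⟫ - f x ≤ g y) :
    -(f 0 * μ.real Set.univ) ≤ ∫ y, g y ∂μ := by
  have h := integral_mono_ae (integrable_const (-f 0)) hg_int <| hg.mono fun y hy => by
    simpa using hy 0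
  simpa [integral_const, mul_comm] using h

theorem integral_inner_mul_inner_le [CompleteSpace E] (hid : Integrable (fun y => y) μ)
    (hbar : ∫ y, y ∂μ = 0) (hg_int : Integrable g μ) (hg : ∀ᵐ y ∂μ, ∀ x, ⟪x, y⟫ - f x ≤ g y)
    {u : E} (hu : ∀ᵐ y ∂μ, |⟪u, y⟫| ≤ 1) (x : E) :
    ∫ y, ⟪x, y⟫ * ⟪u, y⟫ ∂μ ≤ (f x + f 0) * μ.real Set.univ + 2 * ∫ y, g y ∂μ := by
  -- the terms linear in `y` are collected in `⟪v, y⟫`, whose integral vanishes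
  set v := (f x - f 0) • u - x
  have hpt : ∀ᵐ y ∂μ, ⟪x, y⟫ * ⟪u, y⟫ ≤ (f x + f 0) + 2 * g y + ⟪v, y⟫ := by
    filter_upwards [hg, hu] with y hy hyu
    have hx := hy x
    have h0 : -f 0 ≤ g y := by simpa using hy 0
    obtain ⟨hlo, hhi⟩ := abs_le.mp hyu
    simp only [v, inner_sub_left, real_inner_smul_left]
    nlinarith [mul_nonneg (sub_nonneg.mpr hx) (neg_le_iff_add_nonneg'.mp hlo),
      mul_nonneg (neg_le_iff_add_nonneg.mp h0) (sub_nonneg.mpr hhi)]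
  have hint : Integrable (fun y => ⟪x, y⟫ * ⟪u, y⟫) μ :=
    (hid.const_inner x).mul_bdd (hid.const_inner u).aestronglyMeasurable
      (hu.mono fun y hy => by rwa [Real.norm_eq_abs])
  have hconst_int : Integrable (fun y => (f x + f 0) + 2 * g y) μ :=
    (integrable_const _).add (hg_int.const_mul 2)
  calc ∫ y, ⟪x, y⟫ * ⟪u, y⟫ ∂μ ≤ ∫ y, (f x + f 0) + 2 * g y + ⟪v, y⟫ ∂μ :=
        integral_mono_ae hint (hconst_int.add (hid.const_inner v)) hpt
    _ = (f x + f 0) * μ.real Set.univ + 2 * ∫ y, g y ∂μ := by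
        rw [integral_add hconst_int (hid.const_inner v), integral_add (integrable_const _)
          (hg_int.const_mul 2), integral_const, integral_const_mul, integral_inner hid, hbar,
          inner_zero_right, smul_eq_mul, add_zero, mul_comm]

theorem div_mul_norm_le_of_legendre [CompleteSpace E] (hid : Integrable (fun y => y) μ)
    (hbar : ∫ y, y ∂μ = 0) (hg_int : Integrable g μ) (hg : ∀ᵐ y ∂μ, ∀ x, ⟪x, y⟫ - f x ≤ g y)
    {R c : ℝ} (hR : 0 < R) (hbdd : ∀ᵐ y ∂μ, ‖y‖ ≤ R)
    (hc : ∀ u, c * ‖u‖ ^ 2 ≤ ∫ y, ⟪u, y⟫ ^ 2 ∂μ) (x : E) :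
    c / R * ‖x‖ ≤ (f x + f 0) * μ.real Set.univ + 2 * ∫ y, g y ∂μ := by
  set t := (R * ‖x‖)⁻¹
  have ht : 0 ≤ t := by positivity
  have hu : ∀ᵐ y ∂μ, |⟪t • x, y⟫| ≤ 1 := hbdd.mono fun y hy => calc
    |⟪t • x, y⟫| ≤ t * ‖x‖ * ‖y‖ := by
      rw [real_inner_smul_left, abs_mul, abs_of_nonneg ht, mul_assoc]
      exact mul_le_mul_of_nonneg_left (abs_real_inner_le_norm x y) ht
    _ ≤ t * ‖x‖ * R := by gcongr
    _ = t * (R * ‖x‖) := by ring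
    _ ≤ 1 := inv_mul_le_one
  have hxu : ∫ y, ⟪x, y⟫ * ⟪t • x, y⟫ ∂μ = t * ∫ y, ⟪x, y⟫ ^ 2 ∂μ := by
    rw [← integral_const_mul]
    congr 1 with y
    rw [real_inner_smul_left]
    ring
  have hct : c / R * ‖x‖ = t * (c * ‖x‖ ^ 2) := by
    rcases eq_or_ne ‖x‖ 0 with hx | hx
    · simp [hx]
    · simp only [t]
      field_simp
  calc c / R * ‖x‖ = t * (c * ‖x‖ ^ 2) := hct
    _ ≤ t * ∫ y, ⟪x, y⟫ ^ 2 ∂μ := mul_le_mul_of_nonneg_left (hc x) ht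
    _ = ∫ y, ⟪x, y⟫ * ⟪t • x, y⟫ ∂μ := hxu.symm
    _ ≤ _ := integral_inner_mul_inner_le hid hbar hg_int hg hu x

end Legendre

theorem exists_pos_mul_sq_norm_le {F : Type*} [NormedAddCommGroup F] [NormedSpace ℝ F]
    [FiniteDimensional ℝ F] {Q : F → ℝ} (hQ : ContinuousOn Q (sphere 0 1))
    (hsmul : ∀ (t : ℝ) u, Q (t • u) = t ^ 2 * Q u) (hpos : ∀ u ≠ 0, 0 < Q u) :
    ∃ c > 0, ∀ u, c * ‖u‖ ^ 2 ≤ Q u := by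
  have hQ0 : Q 0 = 0 := by simpa using hsmul 0 0
  rcases subsingleton_or_nontrivial F with hF | hF
  · exact ⟨1, one_pos, fun u => by simp [Subsingleton.elim u 0, hQ0]⟩
  obtain ⟨u₀, hu₀, hmin⟩ := (isCompact_sphere (0 : F) 1).exists_isMinOn
    (NormedSpace.sphere_nonempty.mpr zero_le_one) hQ
  refine ⟨Q u₀, hpos u₀ (ne_zero_of_mem_unit_sphere ⟨u₀, hu₀⟩), fun u => ?_⟩
  rcases eq_or_ne u 0 with rfl | hu
  · simp [hQ0]
  have hnorm : ‖u‖ ≠ 0 := norm_ne_zero_iff.mpr hu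
  have hmem : ‖u‖⁻¹ • u ∈ sphere (0 : F) 1 := by
    simp [norm_smul, hnorm]
  calc Q u₀ * ‖u‖ ^ 2 ≤ ‖u‖ ^ 2 * Q (‖u‖⁻¹ • u) := by
        rw [mul_comm]; exact mul_le_mul_of_nonneg_left (hmin hmem) (sq_nonneg _)
    _ = Q u := by rw [← hsmul, smul_smul, mul_inv_cancel₀ hnorm, one_smul]

section InnerSq

variable {E : Type*} [NormedAddCommGroup E] [InnerProductSpace ℝ E] [MeasurableSpace E]

theorem continuousOn_integral_inner_sq {μ : Measure E} [IsFiniteMeasure μ]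
    (hid : Integrable (fun y => y) μ) {R : ℝ} (hbdd : ∀ᵐ y ∂μ, ‖y‖ ≤ R) :
    ContinuousOn (fun u => ∫ y, ⟪u, y⟫ ^ 2 ∂μ) (sphere 0 1) := by
  refine continuousOn_of_dominated (bound := fun _ => R ^ 2)
    (fun u _ => (hid.const_inner u).aestronglyMeasurable.pow 2) (fun u hu => ?_)
    (integrable_const _)
    (ae_of_all _ fun y => (continuous_id.inner continuous_const).pow 2 |>.continuousOn)
  filter_upwards [hbdd] with y hy
  rw [mem_sphere_zero_iff_norm] at hu
  have h := abs_real_inner_le_norm u y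
  rw [hu, one_mul] at h
  rw [norm_pow, Real.norm_eq_abs]
  exact pow_le_pow_left₀ (abs_nonneg _) (h.trans hy) 2

theorem setIntegral_inner_sq_pos [FiniteDimensional ℝ E] [BorelSpace E] (μ : Measure E)
    [μ.IsAddHaarMeasure] {A : Set E} (hA : IsOpen A) (hbdd : Bornology.IsBounded A)
    (hne : A.Nonempty) {u : E} (hu : u ≠ 0) :
    0 < ∫ y in A, ⟪u, y⟫ ^ 2 ∂μ := by
  have hint : IntegrableOn (fun y => ⟪u, y⟫ ^ 2) A μ :=
    ((continuous_const.inner continuous_id).pow 2 |>.continuousOn.integrableOn_compact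
      hbdd.isCompact_closure).mono_set subset_closure
  rw [setIntegral_pos_iff_support_of_nonneg_ae (ae_of_all _ fun _ => sq_nonneg _) hint]
  have hH : μ (ℝ ∙ u)ᗮ = 0 := Measure.addHaar_submodule μ _ <| by
    rwa [Ne, Submodule.orthogonal_eq_top_iff, Submodule.span_singleton_eq_bot]
  calc 0 < μ A := hA.measure_pos μ hne
    _ = μ (A \ (ℝ ∙ u)ᗮ) := (measure_sdiff_null hH).symm
    _ ≤ μ (Function.support (fun y => ⟪u, y⟫ ^ 2) ∩ A) := measure_mono fun y hy => by
        simpa [Submodule.mem_orthogonal_singleton_iff_inner_right, hy.1] using hy.2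

end InnerSq

theorem stmt6_general {n : ℕ} (A : Set (EuclideanSpace ℝ (Fin n)))
    (hA : A.Nonempty) (hopen : IsOpen A) (hbdd : Bornology.IsBounded A)
    (hbar : ∫ y in A, y = (0 : EuclideanSpace ℝ (Fin n))) :
    ∃ r > (0 : ℝ), ∀ (f fstar : EuclideanSpace ℝ (Fin n) → ℝ) (τ : ℝ),
      ConvexOn ℝ Set.univ f → (∀ x, f 0 ≤ f x) →
      (∀ y ∈ A, IsLUB {z : ℝ | ∃ x, z = (inner ℝ x y : ℝ) - f x} (fstar y)) →
      IntegrableOn fstar A → (∫ y in A, fstar y = -τ) →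
      ∀ x, (1 / 2) * (f 0 + τ / (volume A).toReal) + r * ‖x‖ ≤ f x ∧
        τ / (volume A).toReal + r * ‖x‖ ≤
          (1 / 2) * (f 0 + τ / (volume A).toReal) + r * ‖x‖ := by
  obtain ⟨R, hR, hAR⟩ := hbdd.exists_pos_norm_le
  have hfin : volume A < ⊤ := hbdd.measure_lt_top
  have : IsFiniteMeasure (volume.restrict A) := isFiniteMeasure_restrict.mpr hfin.ne
  set V := (volume A).toReal
  have hV : 0 < V := ENNReal.toReal_pos (hopen.measure_pos volume hA).ne' hfin.ne
  have hbddA : ∀ᵐ y ∂volume.restrict A, ‖y‖ ≤ R :=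
    ae_restrict_of_forall_mem hopen.measurableSet hAR
  have hid : Integrable (fun y => y) (volume.restrict A) :=
    Integrable.of_bound aestronglyMeasurable_id R hbddA
  obtain ⟨c, hc, hcQ⟩ := exists_pos_mul_sq_norm_le (continuousOn_integral_inner_sq hid hbddA)
    (fun t u => by simp_rw [real_inner_smul_left, mul_pow, integral_const_mul])
    (fun u hu => setIntegral_inner_sq_pos volume hopen hbdd hA hu)
  refine ⟨c / (4 * R * V), by positivity, fun f fstar τ _ hf0 hlub hint hτ x => ?_⟩
  have hg : ∀ᵐ y ∂volume.restrict A, ∀ x, ⟪x, y⟫ - f x ≤ fstar y :=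
    ae_restrict_of_forall_mem hopen.measurableSet fun y hy x => (hlub y hy).1 ⟨x, rfl⟩
  have hgrowth := div_mul_norm_le_of_legendre hid hbar hint hg hR hbddA hcQ x
  have hlow := neg_mul_measureReal_univ_le_integral hint hg
  rw [measureReal_restrict_apply_univ, measureReal_def, hτ] at hgrowth hlow
  have hτV : τ / V ≤ f 0 := by rw [div_le_iff₀ hV]; linarith
  have hq : c / R * ‖x‖ / V ≤ f x + f 0 - 2 * (τ / V) := by
    rw [div_le_iff₀ hV, sub_mul, mul_assoc, div_mul_cancel₀ _ hV.ne']
    linarith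
  have hr : c / (4 * R * V) * ‖x‖ = c / R * ‖x‖ / V / 4 := by field_simp
  rw [hr]
  constructor <;> linarith [hf0 x]

/-- Uniform linear lower-growth estimate: for `A` open bounded convex with barycenter at
the origin, there is `r > 0` depending only on `A` such that every convex `f` with
`inf f = f 0` and `∫_A f* = -τ` satisfies
`f x ≥ (1/2)(f 0 + τ/λ(A)) + r‖x‖ ≥ τ/λ(A) + r‖x‖`. -/
theorem stmt6 {n : ℕ} (A : Set (EuclideanSpace ℝ (Fin n)))
    (hA : A.Nonempty) (hopen : IsOpen A) (hbdd : Bornology.IsBounded A)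
    (hconv : Convex ℝ A)
    (hbar : ∫ y in A, y = (0 : EuclideanSpace ℝ (Fin n))) :
    ∃ r > (0 : ℝ), ∀ (f fstar : EuclideanSpace ℝ (Fin n) → ℝ) (τ : ℝ),
      ConvexOn ℝ Set.univ f → (∀ x, f 0 ≤ f x) →
      (∀ y ∈ A, IsLUB {z : ℝ | ∃ x, z = (inner ℝ x y : ℝ) - f x} (fstar y)) →
      IntegrableOn fstar A → (∫ y in A, fstar y = -τ) →
      ∀ x, (1 / 2) * (f 0 + τ / (volume A).toReal) + r * ‖x‖ ≤ f x ∧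
        τ / (volume A).toReal + r * ‖x‖ ≤
          (1 / 2) * (f 0 + τ / (volume A).toReal) + r * ‖x‖ :=
  stmt6_general A hA hopen hbdd hbar
end

section
/- Let φ and ψ be smooth convex functions on ℝⁿ with ∇φ(ℝⁿ) = ∇ψ(ℝⁿ) = A and ∫_A φ* dλ = ∫_A ψ* dλ. Then ∫_{ℝⁿ} φ dMA(φ) ≤ ∫_{ℝⁿ} ψ dMA(φ). -/
open MeasureTheory

section AuxLemmas

open Set InnerProductSpace Filter
open scoped RealInnerProductSpace Topology

variable {n : ℕ}

private lemma hasDerivAt_comp_line' {F : Type*} [NormedAddCommGroup F] [NormedSpace ℝ F]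
    {g : EuclideanSpace ℝ (Fin n) → F} (hg : Differentiable ℝ g)
    (x v : EuclideanSpace ℝ (Fin n)) (t : ℝ) :
    HasDerivAt (fun t : ℝ => g (x + t • v)) (fderiv ℝ g (x + t • v) v) t := by
  have hc : HasDerivAt (fun t : ℝ => x + t • v) v t := by
    simpa using ((hasDerivAt_id t).smul_const v).const_add x
  exact (hg _).hasFDerivAt.comp_hasDerivAt t hc

private lemma inner_gradient_eq' {φ : EuclideanSpace ℝ (Fin n) → ℝ}
    (x w : EuclideanSpace ℝ (Fin n)) : ⟪gradient φ x, w⟫_ℝ = fderiv ℝ φ x w :=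
  InnerProductSpace.toDual_symm_apply

private lemma grad_ineq' {φ : EuclideanSpace ℝ (Fin n) → ℝ}
    (hd : Differentiable ℝ φ) (hc : ConvexOn ℝ Set.univ φ)
    (x z : EuclideanSpace ℝ (Fin n)) :
    φ x + ⟪gradient φ x, z - x⟫_ℝ ≤ φ z := by
  set h := fun t : ℝ => φ (x + t • (z - x)) with hh
  have hline := fun t : ℝ => hasDerivAt_comp_line' hd x (z - x) t
  have hconv : ConvexOn ℝ Set.univ h := by
    have h2 := hc.comp_affineMap (AffineMap.lineMap x z : ℝ →ᵃ[ℝ] _)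
    have h3 : (φ ∘ (AffineMap.lineMap x z : ℝ →ᵃ[ℝ] _)) = h := by
      funext t
      simp [hh, AffineMap.lineMap_apply, add_comm]
    rwa [h3, Set.preimage_univ] at h2
  have key := hconv.le_slope_of_hasDerivAt (Set.mem_univ (0:ℝ)) (Set.mem_univ 1)
    one_pos (hline 0)
  have h0 : h 0 = φ x := by simp [hh]
  have h1 : h 1 = φ z := by simp [hh]
  rw [slope_def_field, h0, h1] at key
  have hgr : ⟪gradient φ x, z - x⟫_ℝ = fderiv ℝ φ (x + (0:ℝ) • (z - x)) (z - x) := by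
    rw [inner_gradient_eq']; norm_num
  rw [hgr]
  have heq1 : (φ z - φ x) / (1 - 0) = φ z - φ x := by norm_num
  rw [heq1] at key
  linarith

private lemma grad_mono' {φ : EuclideanSpace ℝ (Fin n) → ℝ}
    (hd : Differentiable ℝ φ) (hc : ConvexOn ℝ Set.univ φ)
    (a b : EuclideanSpace ℝ (Fin n)) :
    0 ≤ ⟪gradient φ a - gradient φ b, a - b⟫_ℝ := by
  have h1 := grad_ineq' hd hc a b
  have h2 := grad_ineq' hd hc b a
  have e1 : ⟪gradient φ a - gradient φ b, a - b⟫_ℝ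
      = -⟪gradient φ a, b - a⟫_ℝ - ⟪gradient φ b, a - b⟫_ℝ := by
    rw [inner_sub_left]
    have : (a - b) = -(b - a) := by abel
    rw [this, inner_neg_right, inner_neg_right]
    try ring
  rw [e1]
  linarith

private lemma deriv_nonneg_of_monotone' {F : ℝ → ℝ} (hF : Monotone F) {c t : ℝ}
    (h : HasDerivAt F c t) : 0 ≤ c := by
  have h2 : Tendsto (slope F t) (𝓝[>] t) (𝓝 c) :=
    (hasDerivAt_iff_tendsto_slope.1 h).mono_left
      (nhdsWithin_mono t fun y (hy : t < y) => Set.mem_compl_singleton_iff.mpr hy.ne')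
  refine ge_of_tendsto h2 ?_
  filter_upwards [self_mem_nhdsWithin] with y hy
  rw [slope_def_field]
  exact div_nonneg (sub_nonneg.2 (hF (le_of_lt hy))) (sub_nonneg.2 (le_of_lt hy))

private lemma deriv_eq_zero_of_monotone_of_eq' {F : ℝ → ℝ} (hF : Monotone F)
    (h01 : F 1 = F 0) {c : ℝ} (h : HasDerivAt F c 0) : c = 0 := by
  have hconst : ∀ y ∈ Set.Ioc (0:ℝ) 1, F y = F 0 := fun y hy =>
    le_antisymm (h01 ▸ hF hy.2) (hF hy.1.le)
  have h2 : Tendsto (slope F 0) (𝓝[>] 0) (𝓝 c) :=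
    (hasDerivAt_iff_tendsto_slope.1 h).mono_left
      (nhdsWithin_mono 0 fun y (hy : 0 < y) => Set.mem_compl_singleton_iff.mpr hy.ne')
  have h3 : Tendsto (slope F 0) (𝓝[>] 0) (𝓝 0) := by
    have heq : slope F 0 =ᶠ[𝓝[>] (0:ℝ)] fun _ => (0:ℝ) := by
      filter_upwards [Ioc_mem_nhdsGT_of_mem (left_mem_Ico.2 one_pos)] with y hy
      simp [slope_def_field, hconst y hy]
    exact Tendsto.congr' heq.symm tendsto_const_nhds
  exact tendsto_nhds_unique h2 h3

private lemma psd_apply_eq_zero'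
    (T : EuclideanSpace ℝ (Fin n) →L[ℝ] EuclideanSpace ℝ (Fin n))
    (hs : ∀ u w, ⟪T u, w⟫_ℝ = ⟪u, T w⟫_ℝ)
    (hp : ∀ u, 0 ≤ ⟪u, T u⟫_ℝ) {v : EuclideanSpace ℝ (Fin n)}
    (h0 : ⟪v, T v⟫_ℝ = 0) : T v = 0 := by
  have key : ∀ w, ⟪v, T w⟫_ℝ = 0 := by
    intro w
    have hb0 : 0 ≤ ⟪w, T w⟫_ℝ := hp w
    have hvw : ⟪w, T v⟫_ℝ = ⟪v, T w⟫_ℝ := by rw [← hs w v, real_inner_comm]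
    have hq : ∀ t : ℝ, 0 ≤ 2 * t * ⟪v, T w⟫_ℝ + t ^ 2 * ⟪w, T w⟫_ℝ := by
      intro t
      have hnn := hp (v + t • w)
      have hTvw : T (v + t • w) = T v + t • T w := by
        rw [ContinuousLinearMap.map_add, ContinuousLinearMap.map_smul]
      rw [hTvw, inner_add_left, inner_add_right, inner_add_right,
        real_inner_smul_left, real_inner_smul_left, real_inner_smul_right,
        real_inner_smul_right, h0, hvw] at hnn
      nlinarith [hnn]
    set a := ⟪v, T w⟫_ℝ with ha
    set b := ⟪w, T w⟫_ℝ with hb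
    have hb1 : 0 < b + 1 := by linarith
    have h3 : 0 ≤ (2 * (-a/(b+1)) * a + (-a/(b+1))^2 * b) * (b+1)^2 :=
      mul_nonneg (hq (-a/(b+1))) (by positivity)
    have h4 : (2 * (-a/(b+1)) * a + (-a/(b+1))^2 * b) * (b+1)^2 = -(a^2*(b+2)) := by
      field_simp
      ring
    rw [h4] at h3
    have ha2 : a ^ 2 = 0 := by nlinarith [sq_nonneg a]
    nlinarith [sq_nonneg a, ha2]
  have hz : ⟪T v, T v⟫_ℝ = 0 := by rw [hs v (T v)]; exact key (T v)
  exact inner_self_eq_zero.1 hz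

private lemma psd_det_nonneg'
    (T : EuclideanSpace ℝ (Fin n) →L[ℝ] EuclideanSpace ℝ (Fin n))
    (hs : ∀ u w, ⟪T u, w⟫_ℝ = ⟪u, T w⟫_ℝ) (hp : ∀ u, 0 ≤ ⟪u, T u⟫_ℝ) :
    0 ≤ LinearMap.det (T : EuclideanSpace ℝ (Fin n) →ₗ[ℝ] EuclideanSpace ℝ (Fin n)) := by
  have hT : (T : EuclideanSpace ℝ (Fin n) →ₗ[ℝ] EuclideanSpace ℝ (Fin n)).IsSymmetric :=
    fun u w => hs u w
  have hn : Module.finrank ℝ (EuclideanSpace ℝ (Fin n)) = n := finrank_euclideanSpace_fin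
  set b := hT.eigenvectorBasis hn with hbdef
  have hmat : LinearMap.toMatrix b.toBasis b.toBasis
      (T : EuclideanSpace ℝ (Fin n) →ₗ[ℝ] EuclideanSpace ℝ (Fin n))
      = Matrix.diagonal (hT.eigenvalues hn) := by
    ext i j
    rw [LinearMap.toMatrix_apply]
    have happ' : ∀ k, T (b k) = hT.eigenvalues hn k • b k := hT.apply_eigenvectorBasis hn
    by_cases h : i = j <;>
      simp [OrthonormalBasis.coe_toBasis, ContinuousLinearMap.coe_coe,
        hT.apply_eigenvectorBasis, Finsupp.single_apply, Matrix.diagonal_apply, h, happ']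
  have hdet : LinearMap.det (T : EuclideanSpace ℝ (Fin n) →ₗ[ℝ] EuclideanSpace ℝ (Fin n))
      = ∏ i, hT.eigenvalues hn i := by
    rw [← LinearMap.det_toMatrix b.toBasis, hmat, Matrix.det_diagonal]
  rw [hdet]
  refine Finset.prod_nonneg fun i _ => ?_
  have hbi : ⟪b i, b i⟫_ℝ = 1 := by
    have := b.orthonormal.1 i
    rw [real_inner_self_eq_norm_mul_norm, this]; norm_num
  have happ : T (b i) = hT.eigenvalues hn i • b i := hT.apply_eigenvectorBasis hn i
  have hnn := hp (b i)
  rw [happ, real_inner_smul_right, hbi] at hnn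
  linarith

private lemma det_eq_zero_of_apply_eq_zero'
    (T : EuclideanSpace ℝ (Fin n) →L[ℝ] EuclideanSpace ℝ (Fin n))
    {v : EuclideanSpace ℝ (Fin n)} (hv : v ≠ 0) (h : T v = 0) :
    LinearMap.det (T : EuclideanSpace ℝ (Fin n) →ₗ[ℝ] EuclideanSpace ℝ (Fin n)) = 0 := by
  by_contra hdet
  set e := LinearMap.equivOfDetNeZero
    (T : EuclideanSpace ℝ (Fin n) →ₗ[ℝ] EuclideanSpace ℝ (Fin n)) hdet with he
  have hcoe : (e : EuclideanSpace ℝ (Fin n) →ₗ[ℝ] EuclideanSpace ℝ (Fin n))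
      = (T : EuclideanSpace ℝ (Fin n) →ₗ[ℝ] EuclideanSpace ℝ (Fin n)) :=
    LinearEquiv.coe_ofIsUnitDet _
  have h2 := DFunLike.congr_fun hcoe v
  have h3 : e v = 0 := by simpa [h] using h2
  exact hv (e.map_eq_zero_iff.1 h3)

private lemma gradient_eq_comp' {φ : EuclideanSpace ℝ (Fin n) → ℝ} :
    gradient φ = ⇑(toDual ℝ (EuclideanSpace ℝ (Fin n))).symm.toContinuousLinearEquiv
      ∘ fderiv ℝ φ := by
  funext y
  simp [gradient]

private lemma contDiff_gradient' {φ : EuclideanSpace ℝ (Fin n) → ℝ}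
    (hsm : ContDiff ℝ (⊤ : ℕ∞) φ) : ContDiff ℝ (⊤ : ℕ∞) (gradient φ) := by
  rw [gradient_eq_comp']
  exact (toDual ℝ (EuclideanSpace ℝ (Fin n))).symm.toContinuousLinearEquiv.contDiff.comp
    (hsm.fderiv_right (by simp))

private lemma fderiv_gradient_inner' {φ : EuclideanSpace ℝ (Fin n) → ℝ}
    (x u w : EuclideanSpace ℝ (Fin n)) :
    ⟪fderiv ℝ (gradient φ) x u, w⟫_ℝ = fderiv ℝ (fderiv ℝ φ) x u w := by
  conv_lhs => rw [gradient_eq_comp', ContinuousLinearEquiv.comp_fderiv]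
  simp [InnerProductSpace.toDual_symm_apply]

private lemma fderiv_grad_symm' {φ : EuclideanSpace ℝ (Fin n) → ℝ}
    (hsm : ContDiff ℝ (⊤ : ℕ∞) φ) (x u w : EuclideanSpace ℝ (Fin n)) :
    ⟪fderiv ℝ (gradient φ) x u, w⟫_ℝ = ⟪u, fderiv ℝ (gradient φ) x w⟫_ℝ := by
  have hdiffφ : Differentiable ℝ φ := hsm.differentiable (by simp)
  have hdiff2 : DifferentiableAt ℝ (fderiv ℝ φ) x :=
    ((hsm.fderiv_right (m := (⊤ : ℕ∞)) (by simp)).differentiable (by simp)) x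
  have hsymm := second_derivative_symmetric (f := φ)
    (fun y => (hdiffφ y).hasFDerivAt) hdiff2.hasFDerivAt u w
  rw [fderiv_gradient_inner', real_inner_comm, fderiv_gradient_inner']
  exact hsymm

private lemma inner_grad_line_hasDerivAt' {φ : EuclideanSpace ℝ (Fin n) → ℝ}
    (hg : Differentiable ℝ (gradient φ)) (x v : EuclideanSpace ℝ (Fin n)) (t : ℝ) :
    HasDerivAt (fun t : ℝ => ⟪v, gradient φ (x + t • v)⟫_ℝ)
      ⟪v, fderiv ℝ (gradient φ) (x + t • v) v⟫_ℝ t := by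
  have h1 := hasDerivAt_comp_line' hg x v t
  have h2 := (innerSL ℝ v).hasFDerivAt.comp_hasDerivAt t h1
  exact h2

private lemma inner_grad_line_monotone' {φ : EuclideanSpace ℝ (Fin n) → ℝ}
    (hd : Differentiable ℝ φ) (hc : ConvexOn ℝ Set.univ φ)
    (x v : EuclideanSpace ℝ (Fin n)) :
    Monotone (fun t : ℝ => ⟪v, gradient φ (x + t • v)⟫_ℝ) := by
  intro s t hst
  rcases eq_or_lt_of_le hst with rfl | hlt
  · exact le_refl _
  · have hmono := grad_mono' hd hc (x + t • v) (x + s • v)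
    have hab : (x + t • v) - (x + s • v) = (t - s) • v := by
      rw [add_sub_add_left_eq_sub, ← sub_smul]
    rw [hab, real_inner_smul_right] at hmono
    have hts : 0 < t - s := sub_pos.2 hlt
    have h2 : 0 ≤ ⟪gradient φ (x + t • v) - gradient φ (x + s • v), v⟫_ℝ := by
      by_contra hneg
      push_neg at hneg
      nlinarith
    rw [inner_sub_left] at h2
    simp only []
    rw [real_inner_comm (gradient φ (x + s • v)) v, real_inner_comm (gradient φ (x + t • v)) v]
    linarith

end AuxLemmas

/-- The Monge–Ampère measure of a smooth convex function: `dMA(φ) = det(∇²φ) dλ`. -/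
noncomputable def MAmeasure {n : ℕ} (φ : EuclideanSpace ℝ (Fin n) → ℝ) :
    Measure (EuclideanSpace ℝ (Fin n)) :=
  volume.withDensity fun x =>
    ENNReal.ofReal (LinearMap.det (fderiv ℝ (gradient φ) x).toLinearMap)

open Set InnerProductSpace Filter
open scoped RealInnerProductSpace Topology NNReal ENNReal

/-- Integral comparison principle: if `φ`, `ψ` are smooth convex with
`∇φ(ℝⁿ) = ∇ψ(ℝⁿ) = A` and `∫_A φ* = ∫_A ψ*`, then `∫ φ dMA(φ) ≤ ∫ ψ dMA(φ)`. -/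
theorem stmt10 {n : ℕ} (A : Set (EuclideanSpace ℝ (Fin n)))
    (hopen : IsOpen A) (hbdd : Bornology.IsBounded A) (hconv : Convex ℝ A)
    (φ ψ φstar ψstar : EuclideanSpace ℝ (Fin n) → ℝ)
    (hφsm : ContDiff ℝ (⊤ : ℕ∞) φ) (hψsm : ContDiff ℝ (⊤ : ℕ∞) ψ)
    (hφc : ConvexOn ℝ Set.univ φ) (hψc : ConvexOn ℝ Set.univ ψ)
    (hφr : Set.range (gradient φ) = A) (hψr : Set.range (gradient ψ) = A)
    (hφstar : ∀ y ∈ A, IsLUB {z : ℝ | ∃ x, z = (inner ℝ x y : ℝ) - φ x} (φstar y))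
    (hψstar : ∀ y ∈ A, IsLUB {z : ℝ | ∃ x, z = (inner ℝ x y : ℝ) - ψ x} (ψstar y))
    (hint1 : IntegrableOn φstar A) (hint2 : IntegrableOn ψstar A)
    (heq : ∫ y in A, φstar y = ∫ y in A, ψstar y)
    (hiφ : Integrable φ (MAmeasure φ)) (hiψ : Integrable ψ (MAmeasure φ)) :
    ∫ x, φ x ∂(MAmeasure φ) ≤ ∫ x, ψ x ∂(MAmeasure φ) := by
  classical
  have hφd : Differentiable ℝ φ := hφsm.differentiable (by simp)
  have hgc : ContDiff ℝ (⊤ : ℕ∞) (gradient φ) := contDiff_gradient' hφsm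
  have hgd : Differentiable ℝ (gradient φ) := hgc.differentiable (by simp)
  set g := gradient φ with hgdef
  set f' := fun x => fderiv ℝ g x with hf'
  set D := fun x => (f' x).det with hD
  have hsymm : ∀ x u w, ⟪f' x u, w⟫_ℝ = ⟪u, f' x w⟫_ℝ := fun x => fderiv_grad_symm' hφsm x
  have hpsd : ∀ x v, 0 ≤ ⟪v, f' x v⟫_ℝ := by
    intro x v
    have hm := inner_grad_line_monotone' hφd hφc x v
    have hder0 : HasDerivAt (fun t : ℝ => ⟪v, g (x + t • v)⟫_ℝ) ⟪v, f' x v⟫_ℝ 0 := by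
      simpa only [zero_smul, add_zero] using inner_grad_line_hasDerivAt' hgd x v 0
    exact deriv_nonneg_of_monotone' hm hder0
  have hD0 : ∀ x, 0 ≤ D x := fun x => psd_det_nonneg' (f' x) (hsymm x) (hpsd x)
  set S := {x : EuclideanSpace ℝ (Fin n) | 0 < D x} with hS
  have hDcont : Continuous D :=
    ContinuousLinearMap.continuous_det.comp (hgc.continuous_fderiv (by simp))
  have hSmeas : MeasurableSet S := (isOpen_lt continuous_const hDcont).measurableSet
  have hfd : ∀ x, HasFDerivAt g (f' x) x := fun x => (hgd x).hasFDerivAt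
  have hfdS : ∀ x ∈ S, HasFDerivWithinAt g (f' x) S x := fun x _ => (hfd x).hasFDerivWithinAt
  have hinj : Set.InjOn g S := by
    intro x hx z hz hxz
    by_contra hne
    have hv : z - x ≠ 0 := sub_ne_zero.2 (Ne.symm hne)
    set v := z - x with hvdef
    have hm := inner_grad_line_monotone' hφd hφc x v
    have hF01 : (fun t : ℝ => ⟪v, g (x + t • v)⟫_ℝ) 1 = (fun t : ℝ => ⟪v, g (x + t • v)⟫_ℝ) 0 := by
      simp only []
      rw [show x + (1:ℝ) • v = z by simp [hvdef], show x + (0:ℝ) • v = x by simp, hxz]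
    have hder0 : HasDerivAt (fun t : ℝ => ⟪v, g (x + t • v)⟫_ℝ) ⟪v, f' x v⟫_ℝ 0 := by
      simpa only [zero_smul, add_zero] using inner_grad_line_hasDerivAt' hgd x v 0
    have hc0 : ⟪v, f' x v⟫_ℝ = 0 := deriv_eq_zero_of_monotone_of_eq' hm hF01 hder0
    have hTv : f' x v = 0 := psd_apply_eq_zero' (f' x) (hsymm x) (hpsd x) hc0
    have hdet0 : D x = 0 := det_eq_zero_of_apply_eq_zero' (f' x) hv hTv
    have hxS : 0 < D x := hx
    rw [hdet0] at hxS
    exact lt_irrefl 0 hxS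
  have hgx_mem : ∀ x, g x ∈ A := fun x => hφr ▸ Set.mem_range_self x
  -- Legendre equality for φ and Young for ψ
  have hleg : ∀ x, φstar (g x) = ⟪x, g x⟫_ℝ - φ x := by
    intro x
    have hlub := hφstar (g x) (hgx_mem x)
    refine le_antisymm (hlub.2 ?_) (hlub.1 ⟨x, rfl⟩)
    rintro z ⟨w, rfl⟩
    have hgi := grad_ineq' hφd hφc x w
    have hin : ⟪gradient φ x, w - x⟫_ℝ = ⟪w, g x⟫_ℝ - ⟪x, g x⟫_ℝ := by
      rw [inner_sub_right, real_inner_comm (gradient φ x) w, real_inner_comm (gradient φ x) x]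
    rw [hin] at hgi
    linarith
  have hyoung : ∀ x, ⟪x, g x⟫_ℝ - ψ x ≤ ψstar (g x) := fun x =>
    (hψstar (g x) (hgx_mem x)).1 ⟨x, rfl⟩
  set u := fun y => φstar y - ψstar y with hu
  have hptwise : ∀ x, u (g x) ≤ ψ x - φ x := by
    intro x
    have h1 := hleg x
    have h2 := hyoung x
    simp only [hu]
    linarith
  -- null set comparison
  have hsub : g '' S ⊆ A := by rw [← hφr]; exact Set.image_subset_range g S
  have hnull : volume (A \ g '' S) = 0 := by
    have hsard : volume (g '' {x | D x = 0}) = 0 :=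
      addHaar_image_eq_zero_of_det_fderivWithin_eq_zero volume
        (fun x _ => (hfd x).hasFDerivWithinAt) (fun x hx => hx)
    refine measure_mono_null ?_ hsard
    rintro y ⟨hyA, hynot⟩
    rw [← hφr] at hyA
    obtain ⟨x, rfl⟩ := hyA
    refine ⟨x, ?_, rfl⟩
    by_contra hDx
    exact hynot ⟨x, lt_of_le_of_ne (hD0 x) (Ne.symm hDx), rfl⟩
  have haeeq : g '' S =ᵐ[volume] A := by
    refine MeasureTheory.ae_eq_set.2 ⟨?_, hnull⟩
    rw [Set.diff_eq_empty.2 hsub]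
    exact measure_empty
  -- rewrite the Monge–Ampère measure as a withDensity with an ℝ≥0 density
  have hMA : MAmeasure φ = volume.withDensity fun x => ((Real.toNNReal (D x) : ℝ≥0) : ℝ≥0∞) :=
    rfl
  have hmeasD : Measurable fun x => Real.toNNReal (D x) :=
    (continuous_real_toNNReal.comp hDcont).measurable
  have hindic : ∀ f : EuclideanSpace ℝ (Fin n) → ℝ,
      (fun x => Real.toNNReal (D x) • f x) = S.indicator (fun x => |D x| • f x) := by
    intro f
    funext x
    by_cases hx : x ∈ S
    · rw [Set.indicator_of_mem hx]
      have h1 : |D x| = D x := abs_of_pos hx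
      rw [h1, NNReal.smul_def, Real.coe_toNNReal _ (hD0 x)]
    · rw [Set.indicator_of_notMem hx]
      have h1 : D x = 0 := le_antisymm (not_lt.1 hx) (hD0 x)
      rw [NNReal.smul_def, h1]
      simp
  have hcov := integral_image_eq_integral_abs_det_fderiv_smul volume hSmeas hfdS hinj u
  have hzero : ∫ x, u (g x) ∂(MAmeasure φ) = 0 := by
    rw [hMA, integral_withDensity_eq_integral_smul hmeasD]
    rw [show (fun x => Real.toNNReal (D x) • u (g x))
        = S.indicator (fun x => |D x| • u (g x)) from hindic _]
    rw [integral_indicator hSmeas]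
    rw [show ∫ x in S, |D x| • u (g x) = ∫ y in g '' S, u y from hcov.symm]
    rw [setIntegral_congr_set haeeq]
    simp only [hu]
    rw [integral_sub hint1 hint2, heq, sub_self]
  have hintu : Integrable (fun x => u (g x)) (MAmeasure φ) := by
    rw [hMA, integrable_withDensity_iff_integrable_smul hmeasD]
    rw [show (fun x => Real.toNNReal (D x) • u (g x))
        = S.indicator (fun x => |D x| • u (g x)) from hindic _]
    rw [integrable_indicator_iff hSmeas]
    rw [show (IntegrableOn (fun x => |D x| • u (g x)) S volume)
        = IntegrableOn u (g '' S) volume from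
      (propext (integrableOn_image_iff_integrableOn_abs_det_fderiv_smul
        volume hSmeas hfdS hinj u)).symm]
    exact IntegrableOn.mono_set (hint1.sub hint2) hsub
  have hcomp : ∫ x, u (g x) ∂(MAmeasure φ) ≤ ∫ x, (ψ x - φ x) ∂(MAmeasure φ) :=
    integral_mono hintu (hiψ.sub hiφ) hptwise
  rw [hzero, integral_sub hiψ hiφ] at hcomp
  linarith
end

section
/- Let h : ℝⁿ → ℝ be a continuous nonnegative function such that h·λ is a probability measure with finite first moment. Then inf { ∫ f h dλ + log(∫ e^{-f} dλ) : f continuous, f > τ, f(x) ≤ C_f(1+|x|) } = -∫ h log h dλ. -/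
/-!
For every admissible `f`, the density `p = e^{-f} / ∫ e^{-f}` satisfies Gibbs' inequality
`∫ h log h ≥ ∫ h log p`, which is exactly the lower bound. For the upper bound take
`f = c - log q` with `q = max g (min (exp j) h)`: truncating `h` at height `exp j` keeps `f`
bounded below, flooring it by a small integrable `g = ε (1 + ‖x‖)^{-r}` with `r > n` gives `f`
linear growth, and the value of the functional at `f` tends to `-∫ h log h` as `j → ∞`,
`ε → 0`.
-/

open MeasureTheory Real Filter Topology

section General

variable {α : Type*} [MeasurableSpace α] {μ : Measure α}

/-- The Donsker–Varadhan functional, with the test function written as `-f`. -/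
noncomputable def dvFunctional (μ : Measure α) (h f : α → ℝ) : ℝ :=
  (∫ x, f x * h x ∂μ) + log (∫ x, exp (-f x) ∂μ)

lemma exp_neg_sub_log (c : ℝ) {y : ℝ} (hy : 0 < y) : exp (-(c - log y)) = exp (-c) * y := by
  rw [neg_sub, sub_eq_add_neg, exp_add, exp_log hy, mul_comm]

lemma sub_le_mul_log_sub_mul_log {a b : ℝ} (ha : 0 ≤ a) (hb : 0 < b) :
    a - b ≤ a * log a - a * log b := by
  rcases ha.eq_or_lt with rfl | ha
  · simpa using hb.le
  · have h := mul_le_mul_of_nonneg_left (log_le_sub_one_of_pos (div_pos hb ha)) ha.le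
    rw [log_div hb.ne' ha.ne', mul_sub, mul_sub, mul_div_cancel₀ _ ha.ne', mul_one] at h
    linarith

lemma neg_integral_mul_log_le_dvFunctional {h f : α → ℝ} (hnn : ∀ x, 0 ≤ h x)
    (hint : Integrable h μ) (hprob : ∫ x, h x ∂μ = 1)
    (hent : Integrable (fun x => h x * log (h x)) μ)
    (hfh : Integrable (fun x => f x * h x) μ) (hef : Integrable (fun x => exp (-f x)) μ) :
    -∫ x, h x * log (h x) ∂μ ≤ dvFunctional μ h f := by
  have : NeZero μ := ⟨by rintro rfl; simp at hprob⟩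
  set Z := ∫ x, exp (-f x) ∂μ
  have hZ : 0 < Z := integral_exp_pos hef
  have gibbs : ∫ x, (h x - exp (-f x) / Z) ∂μ ≤
      ∫ x, (h x * log (h x) + f x * h x + log Z * h x) ∂μ := by
    refine integral_mono (hint.sub (hef.div_const Z))
      ((hent.add hfh).add (hint.const_mul _)) fun x => ?_
    have := sub_le_mul_log_sub_mul_log (hnn x) (div_pos (exp_pos (-f x)) hZ)
    rw [log_div (exp_pos _).ne' hZ.ne', log_exp] at this
    linarith
  rw [integral_sub hint (hef.div_const Z), integral_div, hprob, div_self hZ.ne',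
    integral_add (f := fun x => h x * log (h x) + f x * h x) (hent.add hfh) (hint.const_mul _),
    integral_add hent hfh, integral_const_mul, hprob] at gibbs
  unfold dvFunctional
  linarith

lemma min_mul_mul_log_le_mul_log_max_min {h : ℝ} (hh : 0 ≤ h) (g j : ℝ) :
    min (j * h) (h * log h) ≤ h * log (max g (min (exp j) h)) := by
  rcases hh.eq_or_lt with rfl | hh
  · simp
  · have htrunc : min j (log h) ≤ log (min (exp j) h) := by
      rcases le_total (exp j) h with hle | hle
      · rw [min_eq_left hle, log_exp]; exact min_le_left _ _
      · rw [min_eq_right hle]; exact min_le_right _ _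
    rw [mul_comm j, ← mul_min_of_nonneg _ _ hh.le]
    exact mul_le_mul_of_nonneg_left
      (htrunc.trans (log_le_log (lt_min (exp_pos j) hh) (le_max_right _ _))) hh.le

lemma dvFunctional_sub_log_le {h q L : α → ℝ} (c : ℝ) (hq : ∀ x, 0 < q x)
    (hqi : Integrable q μ) (hint : Integrable h μ) (hprob : ∫ x, h x ∂μ = 1)
    (hfh : Integrable (fun x => (c - log (q x)) * h x) μ) (hLi : Integrable L μ)
    (hL : ∀ x, L x ≤ h x * log (q x)) :
    dvFunctional μ h (fun x => c - log (q x)) ≤ (∫ x, q x ∂μ) - 1 - ∫ x, L x ∂μ := by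
  have : NeZero μ := ⟨by rintro rfl; simp at hprob⟩
  have hQ : 0 < ∫ x, q x ∂μ := by
    simpa only [exp_log (hq _)] using
      integral_exp_pos (f := fun x => log (q x)) (by simpa only [exp_log (hq _)] using hqi)
  have hfirst : ∫ x, (c - log (q x)) * h x ∂μ ≤ c - ∫ x, L x ∂μ := by
    calc ∫ x, (c - log (q x)) * h x ∂μ ≤ ∫ x, (c * h x - L x) ∂μ :=
          integral_mono hfh ((hint.const_mul c).sub hLi) fun x => by nlinarith [hL x]
      _ = c - ∫ x, L x ∂μ := by
          rw [integral_sub (hint.const_mul c) hLi, integral_const_mul, hprob, mul_one]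
  have hsecond : log (∫ x, exp (-(c - log (q x))) ∂μ) ≤ -c + ((∫ x, q x ∂μ) - 1) := by
    simp only [exp_neg_sub_log _ (hq _), integral_const_mul]
    rw [log_mul (exp_pos _).ne' hQ.ne', log_exp]
    linarith [log_le_sub_one_of_pos hQ]
  unfold dvFunctional
  linarith

lemma tendsto_integral_min_natCast_mul_mul_log {h : α → ℝ} (hnn : ∀ x, 0 ≤ h x)
    (hint : Integrable h μ) (hent : Integrable (fun x => h x * log (h x)) μ) :
    Tendsto (fun j : ℕ => ∫ x, min ((j : ℝ) * h x) (h x * log (h x)) ∂μ) atTop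
      (𝓝 (∫ x, h x * log (h x) ∂μ)) := by
  refine tendsto_integral_of_dominated_convergence (fun x => |h x * log (h x)|)
    (fun j => ((hint.const_mul j).inf hent).aestronglyMeasurable) hent.abs
    (fun j => Eventually.of_forall fun x => ?_) (Eventually.of_forall fun x => ?_)
  · rw [norm_eq_abs, abs_le]
    exact ⟨le_min (by linarith [mul_nonneg j.cast_nonneg (hnn x), abs_nonneg (h x * log (h x))])
      (neg_abs_le _), (min_le_right _ _).trans (le_abs_self _)⟩
  · refine tendsto_const_nhds.congr' ?_
    filter_upwards [tendsto_natCast_atTop_atTop.eventually_ge_atTop (log (h x))] with j hj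
    rw [min_eq_right (by nlinarith [hnn x])]

end General

section NormedSpace

variable {E : Type*} [NormedAddCommGroup E] [MeasurableSpace E] {μ : Measure E}

lemma add_mul_le_max_mul_one_add (a b : ℝ) {t : ℝ} (ht : 0 ≤ t) :
    a + b * t ≤ max a b * (1 + t) := by
  nlinarith [le_max_left a b, le_max_right a b]

lemma integrable_mul_of_lt_of_le_mul_one_add_norm {f h : E → ℝ} {τ C : ℝ}
    (hf : AEStronglyMeasurable f μ) (hτ : ∀ x, τ < f x) (hC : ∀ x, f x ≤ C * (1 + ‖x‖))
    (hnn : ∀ x, 0 ≤ h x) (hint : Integrable h μ) (hmom : Integrable (fun x => ‖x‖ * h x) μ) :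
    Integrable (fun x => f x * h x) μ := by
  refine Integrable.mono' ((hint.const_mul (|τ| + |C|)).add (hmom.const_mul |C|))
    (hf.mul hint.aestronglyMeasurable) (Eventually.of_forall fun x => ?_)
  have hfx : |f x| ≤ |τ| + |C| + |C| * ‖x‖ := by
    rw [abs_le]
    constructor
    · nlinarith [hτ x, neg_abs_le τ, abs_nonneg C, norm_nonneg x]
    · nlinarith [hC x, le_abs_self C, norm_nonneg x, abs_nonneg τ]
  rw [norm_mul, norm_eq_abs, norm_eq_abs, abs_of_nonneg (hnn x)]
  calc |f x| * h x ≤ (|τ| + |C| + |C| * ‖x‖) * h x := mul_le_mul_of_nonneg_right hfx (hnn x)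
    _ = (|τ| + |C|) * h x + |C| * (‖x‖ * h x) := by ring

lemma exists_dvFunctional_le [OpensMeasurableSpace E] {h g : E → ℝ} (hc : Continuous h)
    (hnn : ∀ x, 0 ≤ h x) (hint : Integrable h μ) (hprob : ∫ x, h x ∂μ = 1)
    (hmom : Integrable (fun x => ‖x‖ * h x) μ) (hent : Integrable (fun x => h x * log (h x)) μ)
    (hgc : Continuous g) (hg0 : ∀ x, 0 < g x) (hg1 : ∀ x, g x ≤ 1) (hgi : Integrable g μ)
    {a b : ℝ} (hglog : ∀ x, -log (g x) ≤ a + b * ‖x‖) (τ : ℝ) (j : ℕ) :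
    ∃ f : E → ℝ, Continuous f ∧ (∀ x, τ < f x) ∧ (∃ C : ℝ, ∀ x, f x ≤ C * (1 + ‖x‖)) ∧
      Integrable (fun x => exp (-f x)) μ ∧
      dvFunctional μ h f ≤ (∫ x, g x ∂μ) - ∫ x, min ((j : ℝ) * h x) (h x * log (h x)) ∂μ := by
  set q : E → ℝ := fun x => max (g x) (min (exp j) (h x))
  have hq0 : ∀ x, 0 < q x := fun x => (hg0 x).trans_le (le_max_left _ _)
  have hq_le : ∀ x, q x ≤ g x + h x := fun x =>
    max_le (le_add_of_nonneg_right (hnn x))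
      ((min_le_right _ _).trans (le_add_of_nonneg_left (hg0 x).le))
  have hlogq_le : ∀ x, log (q x) ≤ j := fun x => by
    rw [← log_exp j]
    exact log_le_log (hq0 x)
      (max_le ((hg1 x).trans (one_le_exp j.cast_nonneg)) (min_le_left _ _))
  have hlogq_ge : ∀ x, -log (q x) ≤ a + b * ‖x‖ := fun x =>
    (neg_le_neg (log_le_log (hg0 x) (le_max_left _ _))).trans (hglog x)
  have hqc : Continuous q := hgc.max (continuous_const.min hc)
  have hqi : Integrable q μ := Integrable.mono' (hgi.add hint) hqc.aestronglyMeasurable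
    (Eventually.of_forall fun x => (norm_of_nonneg (hq0 x).le).trans_le (hq_le x))
  set c : ℝ := τ + 1 + j
  have hfc : Continuous fun x => c - log (q x) :=
    continuous_const.sub (hqc.log fun x => (hq0 x).ne')
  have hτ : ∀ x, τ < c - log (q x) := fun x => by linarith [hlogq_le x]
  have hC : ∀ x, c - log (q x) ≤ max (c + a) b * (1 + ‖x‖) := fun x => by
    linarith [hlogq_ge x, add_mul_le_max_mul_one_add (c + a) b (norm_nonneg x)]
  refine ⟨fun x => c - log (q x), hfc, hτ, ⟨_, hC⟩, ?_, ?_⟩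
  · simpa only [exp_neg_sub_log c (hq0 _)] using hqi.const_mul (exp (-c))
  · have hQ : ∫ x, q x ∂μ ≤ (∫ x, g x ∂μ) + 1 := by
      rw [← hprob, ← integral_add hgi hint]
      exact integral_mono hqi (hgi.add hint) hq_le
    calc dvFunctional μ h (fun x => c - log (q x))
        ≤ (∫ x, q x ∂μ) - 1 - ∫ x, min ((j : ℝ) * h x) (h x * log (h x)) ∂μ :=
          dvFunctional_sub_log_le c hq0 hqi hint hprob
            (integrable_mul_of_lt_of_le_mul_one_add_norm hfc.aestronglyMeasurable hτ hC hnn hint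
              hmom)
            ((hint.const_mul j).inf hent) fun x => min_mul_mul_log_le_mul_log_max_min (hnn x) _ _
      _ ≤ _ := by linarith

lemma exists_continuous_pos_le_one_integral_le [NormedSpace ℝ E] [FiniteDimensional ℝ E]
    [BorelSpace E] [μ.IsAddHaarMeasure] {δ : ℝ} (hδ : 0 < δ) :
    ∃ g : E → ℝ, Continuous g ∧ (∀ x, 0 < g x) ∧ (∀ x, g x ≤ 1) ∧ Integrable g μ ∧
      ∫ x, g x ∂μ ≤ δ ∧ ∃ a b : ℝ, ∀ x, -log (g x) ≤ a + b * ‖x‖ := by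
  set r : ℝ := Module.finrank ℝ E + 1
  have hr : 0 < r := by positivity
  set φ : E → ℝ := fun x => (1 + ‖x‖) ^ (-r)
  have hφ0 : ∀ x, 0 < φ x := fun x => rpow_pos_of_pos (by positivity) _
  have hφ1 : ∀ x, φ x ≤ 1 := fun x =>
    rpow_le_one_of_one_le_of_nonpos (by linarith [norm_nonneg x]) (by linarith)
  have hφi : Integrable φ μ := integrable_one_add_norm (by linarith)
  set I := ∫ x, φ x ∂μ
  have hI : 0 ≤ I := integral_nonneg fun x => (hφ0 x).le
  set ε := min 1 (δ / (I + 1))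
  have hε : 0 < ε := lt_min one_pos (by positivity)
  refine ⟨fun x => ε * φ x, continuous_const.mul ?_, fun x => mul_pos hε (hφ0 x),
    fun x => mul_le_one₀ (min_le_left _ _) (hφ0 x).le (hφ1 x), hφi.const_mul ε, ?_,
    -log ε, r, fun x => ?_⟩
  · exact (continuous_const.add continuous_norm).rpow_const fun x =>
      Or.inl (add_pos_of_pos_of_nonneg one_pos (norm_nonneg x)).ne'
  · rw [integral_const_mul]
    calc ε * I ≤ δ / (I + 1) * I := mul_le_mul_of_nonneg_right (min_le_right _ _) hI
      _ ≤ δ := by rw [div_mul_eq_mul_div, div_le_iff₀ (by positivity)]; nlinarith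
  · have hlog : log (1 + ‖x‖) ≤ ‖x‖ := by
      linarith [log_le_sub_one_of_pos (show 0 < 1 + ‖x‖ by positivity)]
    rw [log_mul hε.ne' (hφ0 x).ne', log_rpow (by positivity)]
    nlinarith

end NormedSpace

/-- Entropy duality: for `h` continuous nonnegative with `h·λ` a probability measure of
finite first moment (and finite entropy), the infimum of
`∫ f h dλ + log ∫ e^{-f} dλ` over continuous `f > τ` with at most linear growth equals
`-∫ h log h dλ`. -/
theorem stmt11 {n : ℕ} (h : EuclideanSpace ℝ (Fin n) → ℝ)
    (hc : Continuous h) (hnn : ∀ x, 0 ≤ h x)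
    (hint : Integrable h) (hprob : ∫ x, h x = 1)
    (hmom : Integrable fun x => ‖x‖ * h x)
    (hent : Integrable fun x => h x * Real.log (h x))
    (τ : ℝ) :
    IsGLB
      {v : ℝ | ∃ f : EuclideanSpace ℝ (Fin n) → ℝ, Continuous f ∧
        (∀ x, τ < f x) ∧ (∃ C : ℝ, ∀ x, f x ≤ C * (1 + ‖x‖)) ∧
        (Integrable fun x => Real.exp (-f x)) ∧
        v = (∫ x, f x * h x) + Real.log (∫ x, Real.exp (-f x))}
      (-∫ x, h x * Real.log (h x)) := by
  constructor
  · rintro v ⟨f, hf, hτ, ⟨C, hC⟩, hef, rfl⟩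
    exact neg_integral_mul_log_le_dvFunctional hnn hint hprob hent
      (integrable_mul_of_lt_of_le_mul_one_add_norm hf.aestronglyMeasurable hτ hC hnn hint hmom) hef
  · intro w hw
    refine le_of_forall_pos_le_add fun δ hδ => ?_
    obtain ⟨j, hj⟩ := ((tendsto_integral_min_natCast_mul_mul_log hnn hint hent).eventually
      (eventually_gt_nhds (sub_lt_self _ (half_pos hδ)))).exists
    obtain ⟨g, hgc, hg0, hg1, hgi, hgδ, a, b, hglog⟩ :=
      exists_continuous_pos_le_one_integral_le (E := EuclideanSpace ℝ (Fin n)) (μ := volume)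
        (half_pos hδ)
    obtain ⟨f, hf, hτ, hC, hef, hval⟩ :=
      exists_dvFunctional_le hc hnn hint hprob hmom hent hgc hg0 hg1 hgi hglog τ j
    have hwf : w ≤ dvFunctional volume h f := hw ⟨f, hf, hτ, hC, hef, rfl⟩
    linarith
end

section
/- Let s > n, let h : ℝⁿ → ℝ be continuous nonnegative with h·λ a probability measure of finite first moment. Then inf { (∫ f h dλ) · (∫ f^{-s} dλ)^{1/s} : f ∈ C_lin, f > 0 } = (∫ h^{s/(s+1)} dλ)^{(s+1)/s}, i.e. the infimum of ⟨f, hλ⟩ / ‖f‖_{-s} over C_lin equals ‖h‖_{s/(s+1)}. -/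
/-!
For positive `f`, Hölder's inequality with the exponents `s / (s + 1) + 1 / (s + 1) = 1`
applied to `h ^ (s / (s + 1)) = (f * h) ^ (s / (s + 1)) * (f ^ (-s)) ^ (1 / (s + 1))` is the
reverse Hölder bound `‖h‖_{s/(s+1)} ≤ ⟨f, h⟩ * ‖f‖_{-s}`; equality would need
`f = h ^ (-1 / (s + 1))`, which need not have linear growth. It is replaced by
`f_c = (h + (c (1 + ‖x‖)) ^ (-(s + 1))) ^ (-1 / (s + 1)) ≤ c (1 + ‖x‖)`, for which
`f_c h ≤ h ^ (s / (s + 1))` and `f_c ^ (-s) ≤ h ^ (s / (s + 1)) + c ^ (-s) (1 + ‖x‖) ^ (-s)`.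
Since `s > n` the last term is integrable, and its contribution vanishes as `c → ∞`.
-/

open MeasureTheory Real Filter Topology

section Holder

variable {α : Type*} [MeasurableSpace α] {μ : Measure α} {u v : α → ℝ} {p q : ℝ}

theorem lintegral_ofReal_rpow_mul_rpow_le (hu : Integrable u μ) (hv : Integrable v μ)
    (hu0 : ∀ x, 0 ≤ u x) (hv0 : ∀ x, 0 ≤ v x) (hp : 0 ≤ p) (hq : 0 ≤ q) (hpq : p + q = 1) :
    ∫⁻ x, ENNReal.ofReal (u x ^ p * v x ^ q) ∂μ ≤
      ENNReal.ofReal ((∫ x, u x ∂μ) ^ p * (∫ x, v x ∂μ) ^ q) := by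
  have hU : 0 ≤ ∫ x, u x ∂μ := integral_nonneg hu0
  have hV : 0 ≤ ∫ x, v x ∂μ := integral_nonneg hv0
  calc ∫⁻ x, ENNReal.ofReal (u x ^ p * v x ^ q) ∂μ
      = ∫⁻ x, ENNReal.ofReal (u x) ^ p * ENNReal.ofReal (v x) ^ q ∂μ := by
        congr! 2 with x
        rw [ENNReal.ofReal_mul (rpow_nonneg (hu0 x) _), ENNReal.ofReal_rpow_of_nonneg (hu0 x) hp,
          ENNReal.ofReal_rpow_of_nonneg (hv0 x) hq]
    _ ≤ (∫⁻ x, ENNReal.ofReal (u x) ∂μ) ^ p * (∫⁻ x, ENNReal.ofReal (v x) ∂μ) ^ q :=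
        ENNReal.lintegral_mul_norm_pow_le hu.aemeasurable.ennreal_ofReal
          hv.aemeasurable.ennreal_ofReal hp hq hpq
    _ = _ := by
        rw [← ofReal_integral_eq_lintegral_ofReal hu (ae_of_all _ hu0),
          ← ofReal_integral_eq_lintegral_ofReal hv (ae_of_all _ hv0),
          ENNReal.ofReal_rpow_of_nonneg hU hp, ENNReal.ofReal_rpow_of_nonneg hV hq,
          ENNReal.ofReal_mul (rpow_nonneg hU _)]

theorem MeasureTheory.Integrable.rpow_mul_rpow (hu : Integrable u μ) (hv : Integrable v μ)
    (hu0 : ∀ x, 0 ≤ u x) (hv0 : ∀ x, 0 ≤ v x) (hp : 0 ≤ p) (hq : 0 ≤ q) (hpq : p + q = 1) :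
    Integrable (fun x => u x ^ p * v x ^ q) μ := by
  refine ⟨(hu.aemeasurable.pow_const p).mul (hv.aemeasurable.pow_const q) |>.aestronglyMeasurable,
    ?_⟩
  rw [hasFiniteIntegral_iff_ofReal
    (ae_of_all _ fun x => mul_nonneg (rpow_nonneg (hu0 x) _) (rpow_nonneg (hv0 x) _))]
  exact (lintegral_ofReal_rpow_mul_rpow_le hu hv hu0 hv0 hp hq hpq).trans_lt ENNReal.ofReal_lt_top

theorem integral_rpow_mul_rpow_le (hu : Integrable u μ) (hv : Integrable v μ)
    (hu0 : ∀ x, 0 ≤ u x) (hv0 : ∀ x, 0 ≤ v x) (hp : 0 ≤ p) (hq : 0 ≤ q) (hpq : p + q = 1) :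
    ∫ x, u x ^ p * v x ^ q ∂μ ≤ (∫ x, u x ∂μ) ^ p * (∫ x, v x ∂μ) ^ q := by
  have hw0 : ∀ x, 0 ≤ u x ^ p * v x ^ q := fun x =>
    mul_nonneg (rpow_nonneg (hu0 x) _) (rpow_nonneg (hv0 x) _)
  rw [← ENNReal.ofReal_le_ofReal_iff (mul_nonneg (rpow_nonneg (integral_nonneg hu0) _)
      (rpow_nonneg (integral_nonneg hv0) _)),
    ofReal_integral_eq_lintegral_ofReal (hu.rpow_mul_rpow hv hu0 hv0 hp hq hpq) (ae_of_all _ hw0)]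
  exact lintegral_ofReal_rpow_mul_rpow_le hu hv hu0 hv0 hp hq hpq

end Holder

section ReverseHolder

variable {α : Type*} [MeasurableSpace α] {μ : Measure α} {f h : α → ℝ} {s : ℝ}

theorem rpow_div_add_one_eq_mul_rpow_mul_rpow_neg {a b : ℝ} (ha : 0 < a) (hb : 0 ≤ b) :
    b ^ (s / (s + 1)) = (a * b) ^ (s / (s + 1)) * (a ^ (-s)) ^ (1 / (s + 1)) := by
  rw [mul_rpow ha.le hb, ← rpow_mul ha.le, mul_right_comm, ← rpow_add ha,
    show s / (s + 1) + -s * (1 / (s + 1)) = 0 by ring, rpow_zero, one_mul]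

theorem integrable_rpow_div_add_one_of_integrable_mul (hs : 0 ≤ s) (hf : ∀ x, 0 < f x)
    (hh : ∀ x, 0 ≤ h x) (hfh : Integrable (fun x => f x * h x) μ)
    (hfs : Integrable (fun x => f x ^ (-s)) μ) :
    Integrable (fun x => h x ^ (s / (s + 1))) μ := by
  simp_rw [fun x => rpow_div_add_one_eq_mul_rpow_mul_rpow_neg (hf x) (hh x) (s := s)]
  exact hfh.rpow_mul_rpow hfs (fun x => mul_nonneg (hf x).le (hh x))
    (fun x => rpow_nonneg (hf x).le _) (by positivity) (by positivity) (by field_simp)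

theorem rpow_integral_rpow_le_integral_mul_mul (hs : 0 < s) (hf : ∀ x, 0 < f x)
    (hh : ∀ x, 0 ≤ h x) (hfh : Integrable (fun x => f x * h x) μ)
    (hfs : Integrable (fun x => f x ^ (-s)) μ) :
    (∫ x, h x ^ (s / (s + 1)) ∂μ) ^ ((s + 1) / s) ≤
      (∫ x, f x * h x ∂μ) * (∫ x, f x ^ (-s) ∂μ) ^ (1 / s) := by
  have hA : 0 ≤ ∫ x, f x * h x ∂μ := integral_nonneg fun x => mul_nonneg (hf x).le (hh x)
  have hB : 0 ≤ ∫ x, f x ^ (-s) ∂μ := integral_nonneg fun x => rpow_nonneg (hf x).le _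
  calc (∫ x, h x ^ (s / (s + 1)) ∂μ) ^ ((s + 1) / s)
      = (∫ x, (f x * h x) ^ (s / (s + 1)) * (f x ^ (-s)) ^ (1 / (s + 1)) ∂μ) ^ ((s + 1) / s) := by
        simp_rw [fun x => rpow_div_add_one_eq_mul_rpow_mul_rpow_neg (hf x) (hh x) (s := s)]
    _ ≤ ((∫ x, f x * h x ∂μ) ^ (s / (s + 1)) * (∫ x, f x ^ (-s) ∂μ) ^ (1 / (s + 1))) ^
          ((s + 1) / s) := by
        gcongr
        · exact integral_nonneg fun x => mul_nonneg (rpow_nonneg (mul_nonneg (hf x).le (hh x)) _)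
            (rpow_nonneg (rpow_nonneg (hf x).le _) _)
        · exact integral_rpow_mul_rpow_le hfh hfs (fun x => mul_nonneg (hf x).le (hh x))
            (fun x => rpow_nonneg (hf x).le _) (by positivity) (by positivity) (by field_simp)
    _ = (∫ x, f x * h x ∂μ) * (∫ x, f x ^ (-s) ∂μ) ^ (1 / s) := by
        rw [mul_rpow (rpow_nonneg hA _) (rpow_nonneg hB _), ← rpow_mul hA, ← rpow_mul hB,
          show s / (s + 1) * ((s + 1) / s) = 1 by field_simp,
          show 1 / (s + 1) * ((s + 1) / s) = 1 / s by field_simp, rpow_one]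

end ReverseHolder

theorem MeasureTheory.Integrable.mul_of_le {α : Type*} [MeasurableSpace α] {μ : Measure α}
    {f g h : α → ℝ} (hgh : Integrable (fun x => g x * h x) μ)
    (hfh : AEStronglyMeasurable (fun x => f x * h x) μ) (hf0 : ∀ x, 0 ≤ f x)
    (hh0 : ∀ x, 0 ≤ h x) (hfg : ∀ x, f x ≤ g x) :
    Integrable (fun x => f x * h x) μ :=
  hgh.mono' hfh <| ae_of_all _ fun x => by
    rw [norm_of_nonneg (mul_nonneg (hf0 x) (hh0 x))]
    exact mul_le_mul_of_nonneg_right (hfg x) (hh0 x)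

noncomputable def smoothedOptimizer (s a g : ℝ) : ℝ :=
  (a + g ^ (-(s + 1))) ^ (-(1 / (s + 1)))

section SmoothedOptimizer

variable {s a g : ℝ}

theorem smoothedOptimizer_pos (ha : 0 ≤ a) (hg : 0 < g) : 0 < smoothedOptimizer s a g :=
  rpow_pos_of_pos (add_pos_of_nonneg_of_pos ha (rpow_pos_of_pos hg _)) _

theorem smoothedOptimizer_le (hs : 0 < s + 1) (ha : 0 ≤ a) (hg : 0 < g) :
    smoothedOptimizer s a g ≤ g :=
  calc smoothedOptimizer s a g ≤ (g ^ (-(s + 1))) ^ (-(1 / (s + 1))) :=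
        rpow_le_rpow_of_nonpos (rpow_pos_of_pos hg _) (le_add_of_nonneg_left ha)
          (by simp only [neg_nonpos]; positivity)
    _ = g := by rw [← rpow_mul hg.le, show -(s + 1) * -(1 / (s + 1)) = 1 by field_simp, rpow_one]

theorem smoothedOptimizer_mul_le (hs : 0 < s + 1) (ha : 0 ≤ a) (hg : 0 < g) :
    smoothedOptimizer s a g * a ≤ a ^ (s / (s + 1)) := by
  rcases ha.eq_or_lt with rfl | ha
  · rw [mul_zero]
    exact rpow_nonneg le_rfl _
  calc smoothedOptimizer s a g * a ≤ a ^ (-(1 / (s + 1))) * a := by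
        gcongr
        exact rpow_le_rpow_of_nonpos ha (le_add_of_nonneg_right (rpow_pos_of_pos hg _).le)
          (by simp only [neg_nonpos]; positivity)
    _ = a ^ (s / (s + 1)) := by
        rw [← rpow_add_one ha.ne', show -(1 / (s + 1)) + 1 = s / (s + 1) by field_simp; ring]

theorem smoothedOptimizer_rpow_neg_le (hs : 0 ≤ s) (ha : 0 ≤ a) (hg : 0 < g) :
    smoothedOptimizer s a g ^ (-s) ≤ a ^ (s / (s + 1)) + g ^ (-s) :=
  calc smoothedOptimizer s a g ^ (-s) = (a + g ^ (-(s + 1))) ^ (s / (s + 1)) := by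
        rw [smoothedOptimizer, ← rpow_mul (add_nonneg ha (rpow_nonneg hg.le _)),
          show -(1 / (s + 1)) * -s = s / (s + 1) by ring]
    _ ≤ a ^ (s / (s + 1)) + (g ^ (-(s + 1))) ^ (s / (s + 1)) :=
        rpow_add_le_add_rpow ha (rpow_nonneg hg.le _) (by positivity)
          (div_le_one_of_le₀ (by linarith) (by positivity))
    _ = a ^ (s / (s + 1)) + g ^ (-s) := by
        rw [← rpow_mul hg.le, show -(s + 1) * (s / (s + 1)) = -s by field_simp]

end SmoothedOptimizer

section IntegralBounds

variable {α : Type*} [TopologicalSpace α] {s : ℝ} {h g : α → ℝ}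

theorem continuous_smoothedOptimizer (hh : Continuous h) (hg : Continuous g)
    (hh0 : ∀ x, 0 ≤ h x) (hg0 : ∀ x, 0 < g x) :
    Continuous fun x => smoothedOptimizer s (h x) (g x) :=
  (hh.add (hg.rpow_const fun x => .inl (hg0 x).ne')).rpow_const fun x =>
    .inl (add_pos_of_nonneg_of_pos (hh0 x) (rpow_pos_of_pos (hg0 x) _)).ne'

variable [MeasurableSpace α] [OpensMeasurableSpace α] {μ : Measure α}

theorem integrable_smoothedOptimizer_rpow_neg (hs : 0 ≤ s) (hh : Continuous h)
    (hg : Continuous g) (hh0 : ∀ x, 0 ≤ h x) (hg0 : ∀ x, 0 < g x)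
    (hI : Integrable (fun x => h x ^ (s / (s + 1))) μ) (hJ : Integrable (fun x => g x ^ (-s)) μ) :
    Integrable (fun x => smoothedOptimizer s (h x) (g x) ^ (-s)) μ :=
  (hI.add hJ).mono' ((continuous_smoothedOptimizer hh hg hh0 hg0).rpow_const fun x =>
      .inl (smoothedOptimizer_pos (hh0 x) (hg0 x)).ne').aestronglyMeasurable <|
    ae_of_all _ fun x => by
      rw [norm_of_nonneg (rpow_nonneg (smoothedOptimizer_pos (hh0 x) (hg0 x)).le _)]
      exact smoothedOptimizer_rpow_neg_le hs (hh0 x) (hg0 x)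

theorem integral_smoothedOptimizer_mul_mul_le (hs : 0 < s) (hh : Continuous h)
    (hg : Continuous g) (hh0 : ∀ x, 0 ≤ h x) (hg0 : ∀ x, 0 < g x)
    (hgh : Integrable (fun x => g x * h x) μ) (hI : Integrable (fun x => h x ^ (s / (s + 1))) μ)
    (hJ : Integrable (fun x => g x ^ (-s)) μ) :
    (∫ x, smoothedOptimizer s (h x) (g x) * h x ∂μ) *
        (∫ x, smoothedOptimizer s (h x) (g x) ^ (-s) ∂μ) ^ (1 / s) ≤
      (∫ x, h x ^ (s / (s + 1)) ∂μ) *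
        (∫ x, h x ^ (s / (s + 1)) ∂μ + ∫ x, g x ^ (-s) ∂μ) ^ (1 / s) := by
  set f := fun x => smoothedOptimizer s (h x) (g x)
  have hf0 : ∀ x, 0 < f x := fun x => smoothedOptimizer_pos (hh0 x) (hg0 x)
  have hfc : Continuous f := continuous_smoothedOptimizer hh hg hh0 hg0
  have hfh : Integrable (fun x => f x * h x) μ :=
    hgh.mul_of_le (hfc.mul hh).aestronglyMeasurable (fun x => (hf0 x).le) hh0
      fun x => smoothedOptimizer_le (by linarith) (hh0 x) (hg0 x)
  have hfs := integrable_smoothedOptimizer_rpow_neg hs.le hh hg hh0 hg0 hI hJ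
  have hfs_le : ∫ x, f x ^ (-s) ∂μ ≤ ∫ x, h x ^ (s / (s + 1)) ∂μ + ∫ x, g x ^ (-s) ∂μ := by
    rw [← integral_add hI hJ]
    exact integral_mono hfs (hI.add hJ) fun x => smoothedOptimizer_rpow_neg_le hs.le (hh0 x) (hg0 x)
  exact mul_le_mul
    (integral_mono hfh hI fun x => smoothedOptimizer_mul_le (by linarith) (hh0 x) (hg0 x))
    (rpow_le_rpow (integral_nonneg fun x => rpow_nonneg (hf0 x).le _) hfs_le (by positivity))
    (rpow_nonneg (integral_nonneg fun x => rpow_nonneg (hf0 x).le _) _)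
    (integral_nonneg fun x => rpow_nonneg (hh0 x) _)

end IntegralBounds

section LinearGrowth

variable {E : Type*} [NormedAddCommGroup E] [MeasurableSpace E] [OpensMeasurableSpace E]
  {μ : Measure E} {s c : ℝ} {h : E → ℝ}

theorem exists_linearGrowth_integral_mul_mul_le (hs : 0 < s) (hc : 0 < c) (hh : Continuous h)
    (hh0 : ∀ x, 0 ≤ h x) (hUh : Integrable (fun x => (1 + ‖x‖) * h x) μ)
    (hI : Integrable (fun x => h x ^ (s / (s + 1))) μ)
    (hJ : Integrable (fun x => (1 + ‖x‖) ^ (-s)) μ) :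
    ∃ f : E → ℝ, Continuous f ∧ (∀ x, 0 < f x) ∧ (∃ C : ℝ, ∀ x, f x ≤ C * (1 + ‖x‖)) ∧
      Integrable (fun x => f x ^ (-s)) μ ∧
      (∫ x, f x * h x ∂μ) * (∫ x, f x ^ (-s) ∂μ) ^ (1 / s) ≤
        (∫ x, h x ^ (s / (s + 1)) ∂μ) *
          (∫ x, h x ^ (s / (s + 1)) ∂μ + c ^ (-s) * ∫ x, (1 + ‖x‖) ^ (-s) ∂μ) ^ (1 / s) := by
  set g : E → ℝ := fun x => c * (1 + ‖x‖)
  have hg0 : ∀ x, 0 < g x := fun x => by positivity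
  have hgc : Continuous g := continuous_const.mul (continuous_const.add continuous_norm)
  have hgh : Integrable (fun x => g x * h x) μ := by
    simpa only [g, mul_assoc] using hUh.const_mul c
  have hgs : (fun x => g x ^ (-s)) = fun x => c ^ (-s) * (1 + ‖x‖) ^ (-s) :=
    funext fun x => mul_rpow hc.le (by positivity)
  have hgJ : Integrable (fun x => g x ^ (-s)) μ := hgs ▸ hJ.const_mul _
  refine ⟨_, continuous_smoothedOptimizer hh hgc hh0 hg0,
    fun x => smoothedOptimizer_pos (hh0 x) (hg0 x),
    ⟨c, fun x => smoothedOptimizer_le (by linarith) (hh0 x) (hg0 x)⟩,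
    integrable_smoothedOptimizer_rpow_neg hs.le hh hgc hh0 hg0 hI hgJ, ?_⟩
  rw [← integral_const_mul, ← hgs]
  exact integral_smoothedOptimizer_mul_mul_le hs hh hgc hh0 hg0 hgh hI hgJ

end LinearGrowth

theorem tendsto_mul_rpow_add_rpow_neg_mul {I J s : ℝ} (hI : 0 ≤ I) (hs : 0 < s) :
    Tendsto (fun c : ℝ => I * (I + c ^ (-s) * J) ^ (1 / s)) atTop (𝓝 (I ^ ((s + 1) / s))) := by
  have hlim : Tendsto (fun c : ℝ => I + c ^ (-s) * J) atTop (𝓝 I) := by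
    simpa using tendsto_const_nhds.add ((tendsto_rpow_neg_atTop hs).mul_const J)
  rw [add_div, div_self hs.ne', rpow_add' hI (by positivity), rpow_one]
  exact ((continuousAt_rpow_const _ _ (.inr (by positivity))).tendsto.comp hlim).const_mul I

theorem stmt13_general {n : ℕ} (s : ℝ) (hs : (n : ℝ) < s)
    (h : EuclideanSpace ℝ (Fin n) → ℝ)
    (hc : Continuous h) (hnn : ∀ x, 0 ≤ h x)
    (hint : Integrable h)
    (hmom : Integrable fun x => ‖x‖ * h x) :
    IsGLB
      {v : ℝ | ∃ f : EuclideanSpace ℝ (Fin n) → ℝ, Continuous f ∧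
        (∀ x, 0 < f x) ∧ (∃ C : ℝ, ∀ x, f x ≤ C * (1 + ‖x‖)) ∧
        (Integrable fun x => f x ^ (-s)) ∧
        v = (∫ x, f x * h x) * (∫ x, f x ^ (-s)) ^ (1 / s)}
      ((∫ x, h x ^ (s / (s + 1))) ^ ((s + 1) / s)) := by
  have hs0 : 0 < s := (Nat.cast_nonneg n).trans_lt hs
  have hJ : Integrable fun x : EuclideanSpace ℝ (Fin n) => (1 + ‖x‖) ^ (-s) :=
    integrable_one_add_norm (by rwa [finrank_euclideanSpace_fin])
  have hUh : Integrable fun x => (1 + ‖x‖) * h x :=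
    (hint.add hmom).congr (.of_forall fun x => by simp only [Pi.add_apply]; ring)
  have hI : Integrable fun x => h x ^ (s / (s + 1)) :=
    integrable_rpow_div_add_one_of_integrable_mul hs0.le (fun x => by positivity) hnn hUh hJ
  refine ⟨?_, fun b hb => ?_⟩
  · rintro _ ⟨f, hfc, hf0, ⟨C, hC⟩, hfs, rfl⟩
    have hfh : Integrable fun x => f x * h x := by
      refine Integrable.mul_of_le ?_ (hfc.mul hc).aestronglyMeasurable (fun x => (hf0 x).le) hnn hC
      simpa only [mul_assoc] using hUh.const_mul C
    exact rpow_integral_rpow_le_integral_mul_mul hs0 hf0 hnn hfh hfs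
  · refine ge_of_tendsto (tendsto_mul_rpow_add_rpow_neg_mul
      (J := ∫ x : EuclideanSpace ℝ (Fin n), (1 + ‖x‖) ^ (-s))
      (integral_nonneg fun x => rpow_nonneg (hnn x) _) hs0) ?_
    filter_upwards [eventually_gt_atTop 0] with c hc0
    obtain ⟨f, hfc, hf0, hfC, hfs, hle⟩ :=
      exists_linearGrowth_integral_mul_mul_le hs0 hc0 hc hnn hUh hI hJ
    exact (hb ⟨f, hfc, hf0, hfC, hfs, rfl⟩).trans hle

/-- For `s > n` and `h` continuous nonnegative with `h·λ` a probability measure of finite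
first moment, the infimum of `(∫ f h dλ) · (∫ f^{-s} dλ)^{1/s}` over positive continuous
`f` of at most linear growth equals `(∫ h^{s/(s+1)} dλ)^{(s+1)/s}`. -/
theorem stmt13 {n : ℕ} (s : ℝ) (hs : (n : ℝ) < s)
    (h : EuclideanSpace ℝ (Fin n) → ℝ)
    (hc : Continuous h) (hnn : ∀ x, 0 ≤ h x)
    (hint : Integrable h) (hprob : ∫ x, h x = 1)
    (hmom : Integrable fun x => ‖x‖ * h x) :
    IsGLB
      {v : ℝ | ∃ f : EuclideanSpace ℝ (Fin n) → ℝ, Continuous f ∧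
        (∀ x, 0 < f x) ∧ (∃ C : ℝ, ∀ x, f x ≤ C * (1 + ‖x‖)) ∧
        (Integrable fun x => f x ^ (-s)) ∧
        v = (∫ x, f x * h x) * (∫ x, f x ^ (-s)) ^ (1 / s)}
      ((∫ x, h x ^ (s / (s + 1))) ^ ((s + 1) / s)) :=
  stmt13_general s hs h hc hnn hint hmom
end

section
/- Let A ⊂ ℝⁿ be open, bounded, convex with the origin in its interior, and let φ : ℝⁿ → (0,∞) be a smooth strictly convex function with ∇φ(ℝⁿ) = A. Then for each unit vector x ∈ S^{n-1}, lim_{r→∞} r·x/φ(r·x) = x / sup_{y ∈ A} ⟨x,y⟩, and this limit point lies in the boundary of the polar set A° = {y : ⟨x,y⟩ ≤ 1 for all x ∈ A}. -/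
open MeasureTheory Set

variable {E : Type*} [NormedAddCommGroup E] [InnerProductSpace ℝ E] [CompleteSpace E]

lemma aux_hasDerivAt_line (φ : E → ℝ) (hφ : Differentiable ℝ φ) (p v : E) (s : ℝ) :
    HasDerivAt (fun r : ℝ => φ (p + r • v)) (inner ℝ (gradient φ (p + s • v)) v : ℝ) s := by
  have h1 : HasDerivAt (fun r : ℝ => p + r • v) v s := by
    simpa using ((hasDerivAt_id s).smul_const v).const_add p
  have h2 := ((hφ (p + s • v)).hasGradientAt).hasFDerivAt
  have h3 := h2.comp_hasDerivAt s h1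
  rw [InnerProductSpace.toDual_apply_apply] at h3
  exact h3

omit [CompleteSpace E] in
lemma aux_convexOn_line (φ : E → ℝ) (hc : ConvexOn ℝ Set.univ φ) (p v : E) :
    ConvexOn ℝ Set.univ (fun r : ℝ => φ (p + r • v)) := by
  have := hc.comp_affineMap (AffineMap.lineMap p (p + v) : ℝ →ᵃ[ℝ] E)
  rw [Set.preimage_univ] at this
  have heq : (fun r : ℝ => φ (p + r • v)) = φ ∘ ⇑(AffineMap.lineMap p (p + v) : ℝ →ᵃ[ℝ] E) := by
    funext r
    simp [AffineMap.lineMap_apply, add_comm]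
  rw [heq]; exact this

lemma aux_grad_mono (φ : E → ℝ) (hφ : Differentiable ℝ φ) (hc : ConvexOn ℝ Set.univ φ)
    (p q : E) : (inner ℝ (gradient φ p) (q - p) : ℝ) ≤ inner ℝ (gradient φ q) (q - p) := by
  have hconv := aux_convexOn_line φ hc p (q - p)
  have hder : ∀ s : ℝ, HasDerivAt (fun r : ℝ => φ (p + r • (q - p)))
      (inner ℝ (gradient φ (p + s • (q - p))) (q - p) : ℝ) s :=
    fun s => aux_hasDerivAt_line φ hφ p (q - p) s
  have hmono := hconv.monotoneOn_deriv (fun y _ => (hder y).differentiableAt)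
  have h01 := hmono (Set.mem_univ 0) (Set.mem_univ 1) zero_le_one
  rw [(hder 0).deriv, (hder 1).deriv] at h01
  simpa using h01

lemma aux_tendsto_div (f : ℝ → ℝ) (g : ℝ → ℝ) (M : ℝ)
    (hder : ∀ r, HasDerivAt f (g r) r)
    (hconv : ConvexOn ℝ Set.univ f)
    (hle : ∀ r, g r ≤ M)
    (hsup : ∀ c < M, ∃ s, c < g s) :
    Filter.Tendsto (fun r => f r / r) Filter.atTop (nhds M) := by
  rw [tendsto_order]
  constructor
  · intro c hc
    obtain ⟨c', hcc', hc'M⟩ := exists_between hc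
    obtain ⟨s, hs⟩ := hsup c' hc'M
    have key : ∀ r, s < r → c' * (r - s) + f s ≤ f r := by
      intro r hr
      have := hconv.deriv_le_slope (Set.mem_univ s) (Set.mem_univ r) hr
        (hder s).differentiableAt
      rw [(hder s).deriv] at this
      have h2 : c' ≤ slope f s r := le_of_lt (lt_of_lt_of_le hs this)
      rw [slope_def_field, le_div_iff₀ (by linarith : (0:ℝ) < r - s)] at h2
      nlinarith
    have hlim : Filter.Tendsto (fun r => (c' * (r - s) + f s) / r) Filter.atTop (nhds c') := by
      have : Filter.Tendsto (fun r : ℝ => c' - (c' * s - f s) / r) Filter.atTop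
          (nhds (c' - 0)) :=
        Filter.Tendsto.sub tendsto_const_nhds
          (Filter.Tendsto.div_atTop tendsto_const_nhds Filter.tendsto_id)
      rw [sub_zero] at this
      apply this.congr'
      filter_upwards [Filter.eventually_gt_atTop 0] with r hr
      field_simp
      ring
    have := hlim.eventually_const_lt hcc'
    filter_upwards [this, Filter.eventually_gt_atTop (max s 0)] with r h1 h2
    have hrs : s < r := lt_of_le_of_lt (le_max_left _ _) h2
    have hr0 : (0:ℝ) < r := lt_of_le_of_lt (le_max_right _ _) h2
    exact lt_of_lt_of_le h1 (div_le_div_of_nonneg_right (key r hrs) hr0.le |>.trans_eq rfl)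
  · intro c hc
    have key : ∀ r, 0 < r → f r ≤ f 0 + M * r := by
      intro r hr
      have := hconv.slope_le_deriv (Set.mem_univ 0) (Set.mem_univ r) hr
        (hder r).differentiableAt
      rw [(hder r).deriv, slope_def_field] at this
      have h2 := this.trans (hle r)
      rw [sub_zero, div_le_iff₀ hr] at h2
      linarith
    have hlim : Filter.Tendsto (fun r => f 0 / r + M) Filter.atTop (nhds (0 + M)) :=
      Filter.Tendsto.add (Filter.Tendsto.div_atTop tendsto_const_nhds Filter.tendsto_id)
        tendsto_const_nhds
    rw [zero_add] at hlim
    have := hlim.eventually_lt_const hc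
    filter_upwards [this, Filter.eventually_gt_atTop 0] with r h1 h2
    calc f r / r ≤ (f 0 + M * r) / r := div_le_div_of_nonneg_right (key r h2) h2.le
    _ = f 0 / r + M := by field_simp
    _ < c := h1

/-- For `A` open bounded convex containing the origin and `φ > 0` smooth strictly convex
with `∇φ(ℝⁿ) = A`: for each unit vector `x`,
`r·x / φ(r·x) → x / sup_{y ∈ A} ⟨x,y⟩` as `r → ∞`, and the limit lies in the boundary of
the polar set `A° = {y : ⟨z,y⟩ ≤ 1 for all z ∈ A}`. -/
theorem stmt17 {n : ℕ} (A : Set (EuclideanSpace ℝ (Fin n)))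
    (hopen : IsOpen A) (hbdd : Bornology.IsBounded A) (hconv : Convex ℝ A)
    (h0 : (0 : EuclideanSpace ℝ (Fin n)) ∈ A)
    (φ : EuclideanSpace ℝ (Fin n) → ℝ)
    (hsm : ContDiff ℝ (⊤ : ℕ∞) φ) (hsc : StrictConvexOn ℝ Set.univ φ)
    (hpos : ∀ x, 0 < φ x) (hrange : Set.range (gradient φ) = A) :
    ∀ x : EuclideanSpace ℝ (Fin n), ‖x‖ = 1 →
      Filter.Tendsto (fun r : ℝ => (φ (r • x))⁻¹ • (r • x)) Filter.atTop
        (nhds ((sSup {t : ℝ | ∃ y ∈ A, t = (inner ℝ x y : ℝ)})⁻¹ • x)) ∧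
      (sSup {t : ℝ | ∃ y ∈ A, t = (inner ℝ x y : ℝ)})⁻¹ • x ∈
        frontier {y : EuclideanSpace ℝ (Fin n) | ∀ z ∈ A, (inner ℝ z y : ℝ) ≤ 1} := by
  intro x hx
  have hφd : Differentiable ℝ φ := hsm.differentiable (by simp)
  have hφc : ConvexOn ℝ Set.univ φ := hsc.convexOn
  set S : Set ℝ := {t : ℝ | ∃ y ∈ A, t = (inner ℝ x y : ℝ)} with hS
  set M : ℝ := sSup S with hMdef
  have hSne : S.Nonempty := ⟨(inner ℝ x 0 : ℝ), 0, h0, rfl⟩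
  obtain ⟨C, hC⟩ := hbdd.exists_norm_le
  have hSbdd : BddAbove S := by
    refine ⟨C, ?_⟩
    rintro t ⟨y, hy, rfl⟩
    calc (inner ℝ x y : ℝ) ≤ ‖x‖ * ‖y‖ := real_inner_le_norm x y
    _ = ‖y‖ := by rw [hx, one_mul]
    _ ≤ C := hC y hy
  have hM0 : 0 < M := by
    obtain ⟨ε, hε, hball⟩ := Metric.isOpen_iff.mp hopen 0 h0
    have hmem : (ε/2) • x ∈ A := by
      apply hball
      rw [Metric.mem_ball, dist_zero_right, norm_smul, hx, mul_one, Real.norm_eq_abs,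
        abs_of_pos (by linarith : (0:ℝ) < ε/2)]
      linarith
    have : ε/2 ∈ S := ⟨(ε/2) • x, hmem, by
      rw [real_inner_smul_right, real_inner_self_eq_norm_sq, hx]; ring⟩
    have := le_csSup hSbdd this
    linarith
  -- the one-dimensional function and its derivative
  set f : ℝ → ℝ := fun r => φ (r • x) with hf
  set g : ℝ → ℝ := fun r => (inner ℝ (gradient φ (r • x)) x : ℝ) with hg
  have hder : ∀ r, HasDerivAt f (g r) r := by
    intro r
    have := aux_hasDerivAt_line φ hφd 0 x r
    simpa [f, g] using this
  have hconvf : ConvexOn ℝ Set.univ f := by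
    have := aux_convexOn_line φ hφc 0 x
    simpa using this
  have hgA : ∀ r : ℝ, gradient φ (r • x) ∈ A := by
    intro r; rw [← hrange]; exact Set.mem_range_self _
  have hle : ∀ r, g r ≤ M :=
    fun r => le_csSup hSbdd ⟨gradient φ (r • x), hgA r, (real_inner_comm _ _)⟩
  have hsup : ∀ c < M, ∃ s, c < g s := by
    intro c hc
    obtain ⟨t, ⟨y, hy, rfl⟩, hct⟩ := exists_lt_of_lt_csSup hSne hc
    obtain ⟨p, hp⟩ := (by rw [hrange]; exact hy : y ∈ Set.range (gradient φ))
    set D : ℝ := C * ‖p‖ + |(inner ℝ y p : ℝ)| with hD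
    have hD0 : 0 ≤ D := by
      have h1 : 0 ≤ C := le_trans (norm_nonneg _) (hC 0 h0)
      positivity
    set s : ℝ := D / ((inner ℝ x y : ℝ) - c) + 1 with hs
    have hden : 0 < (inner ℝ x y : ℝ) - c := by linarith
    have hs0 : 0 < s := by positivity
    refine ⟨s, ?_⟩
    have hmono := aux_grad_mono φ hφd hφc p (s • x)
    rw [hp] at hmono
    rw [inner_sub_right, inner_sub_right, real_inner_smul_right, real_inner_smul_right]
      at hmono
    have hb : |(inner ℝ (gradient φ (s • x)) p : ℝ)| ≤ C * ‖p‖ := by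
      calc |(inner ℝ (gradient φ (s • x)) p : ℝ)| ≤ ‖gradient φ (s • x)‖ * ‖p‖ :=
        abs_real_inner_le_norm _ _
      _ ≤ C * ‖p‖ := by
          apply mul_le_mul_of_nonneg_right (hC _ (hgA s)) (norm_nonneg _)
    have hxy : (inner ℝ y x : ℝ) = (inner ℝ x y : ℝ) := real_inner_comm _ _
    have hgs : (inner ℝ (gradient φ (s • x)) x : ℝ) = g s := rfl
    -- from hmono : s * ⟪y,x⟫ - ⟪y,p⟫ ≤ s * g s - ⟪grad, p⟫
    have h1 : -(C * ‖p‖) ≤ (inner ℝ (gradient φ (s • x)) p : ℝ) := neg_le_of_abs_le hb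
    have h2 : (inner ℝ y p : ℝ) ≤ |(inner ℝ y p : ℝ)| := le_abs_self _
    have key : s * (inner ℝ x y : ℝ) - D ≤ s * g s := by
      rw [← hgs, hD]
      nlinarith [hmono, hxy]
    have hineq : (inner ℝ x y : ℝ) - D / s ≤ g s := by
      have h3 := div_le_div_of_nonneg_right key hs0.le
      rw [sub_div, mul_div_cancel_left₀ _ hs0.ne', mul_div_cancel_left₀ _ hs0.ne'] at h3
      exact h3
    have hDs : D / s < (inner ℝ x y : ℝ) - c := by
      have hprod : ((inner ℝ x y : ℝ) - c) * s = D + ((inner ℝ x y : ℝ) - c) := by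
        rw [hs, mul_add, mul_one, mul_div_cancel₀ _ hden.ne']
      rw [div_lt_iff₀ hs0, hprod]
      linarith
    linarith
  have htend := aux_tendsto_div f g M hder hconvf hle hsup
  have hfpos : ∀ r, 0 < f r := fun r => hpos _
  have htend2 : Filter.Tendsto (fun r => r / f r) Filter.atTop (nhds M⁻¹) := by
    have := htend.inv₀ hM0.ne'
    apply this.congr
    intro r
    rw [inv_div]
  constructor
  · have : (fun r : ℝ => (φ (r • x))⁻¹ • (r • x)) = fun r : ℝ => (r / f r) • x := by
      funext r
      rw [smul_smul, div_eq_mul_inv, mul_comm]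
    rw [this]
    exact htend2.smul_const x
  · rw [frontier]
    constructor
    · apply subset_closure
      intro z hz
      have hzM : (inner ℝ x z : ℝ) ≤ M := le_csSup hSbdd ⟨z, hz, rfl⟩
      rw [real_inner_smul_right, real_inner_comm]
      calc M⁻¹ * (inner ℝ x z : ℝ) ≤ M⁻¹ * M :=
        mul_le_mul_of_nonneg_left hzM (inv_nonneg.mpr hM0.le)
      _ = 1 := inv_mul_cancel₀ hM0.ne'
    · intro hint
      rw [mem_interior_iff_mem_nhds, Metric.mem_nhds_iff] at hint
      obtain ⟨ε, hε, hball⟩ := hint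
      set u : EuclideanSpace ℝ (Fin n) := (M⁻¹ + ε/2) • x with hu
      have huball : u ∈ Metric.ball (M⁻¹ • x) ε := by
        rw [Metric.mem_ball, dist_eq_norm]
        have : u - M⁻¹ • x = (ε/2) • x := by
          rw [hu, ← sub_smul]; congr 1; ring
        rw [this, norm_smul, hx, mul_one, Real.norm_eq_abs,
          abs_of_pos (by linarith : (0:ℝ) < ε/2)]
        linarith
      have huP := hball huball
      have hspos : 0 < M⁻¹ + ε/2 := by positivity
      have hlt : (M⁻¹ + ε/2)⁻¹ < M := by
        rw [inv_lt_iff_one_lt_mul₀ hspos]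
        have : M * M⁻¹ = 1 := mul_inv_cancel₀ hM0.ne'
        nlinarith
      obtain ⟨t, ⟨z, hz, rfl⟩, hlt2⟩ := exists_lt_of_lt_csSup hSne hlt
      have := huP z hz
      rw [hu, real_inner_smul_right, real_inner_comm] at this
      rw [inv_lt_iff_one_lt_mul₀ hspos] at hlt2
      nlinarith
end

section
/- Let φ : ℝⁿ → ℝ be a smooth strictly convex function, and set ψ = det(∇²φ)^{-1/(n+2)}. For the graph immersion f(x) = (∇φ(x), ⟨x,∇φ(x)⟩ - φ(x)), the determinant of the (n+1)×(n+1) matrix whose first n columns are ∂f/∂x_i and whose last column is ξ = -(∇ψ, ⟨x,∇ψ⟩ - ψ) equals ψ^{-(n+1)}. -/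
open MeasureTheory

/-- For the Legendre graph immersion `f(x) = (∇φ(x), ⟨x,∇φ(x)⟩ - φ(x))` of a smooth
strictly convex `φ` with positive Hessian determinant, and `ψ = det(∇²φ)^{-1/(n+2)}`, the
determinant of the `(n+1)×(n+1)` matrix whose first `n` columns are `∂f/∂xᵢ` and whose
last column is `ξ = -(∇ψ, ⟨x,∇ψ⟩ - ψ)` equals `ψ^{-(n+1)}`. -/
theorem stmt18 {n : ℕ}
    (φ ψ : EuclideanSpace ℝ (Fin n) → ℝ)
    (hsm : ContDiff ℝ (⊤ : ℕ∞) φ) (hsc : StrictConvexOn ℝ Set.univ φ)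
    (hdet : ∀ y, 0 < LinearMap.det (fderiv ℝ (gradient φ) y).toLinearMap)
    (hψ : ∀ y, ψ y =
      LinearMap.det (fderiv ℝ (gradient φ) y).toLinearMap ^ (-(1 : ℝ) / ((n : ℝ) + 2)))
    (x : EuclideanSpace ℝ (Fin n))
    (H : Matrix (Fin n) (Fin n) ℝ)
    (hH : ∀ i j, H i j = fderiv ℝ (gradient φ) x (EuclideanSpace.single j 1) i)
    (M : Matrix (Fin n ⊕ Unit) (Fin n ⊕ Unit) ℝ)
    (hM1 : ∀ i j, M (Sum.inl i) (Sum.inl j) = H i j)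
    (hM2 : ∀ i, M (Sum.inl i) (Sum.inr ()) = -(gradient ψ x i))
    (hM3 : ∀ j, M (Sum.inr ()) (Sum.inl j) = ∑ k, H j k * x k)
    (hM4 : M (Sum.inr ()) (Sum.inr ()) = -((inner ℝ x (gradient ψ x) : ℝ) - ψ x)) :
    M.det = ψ x ^ (-((n : ℝ) + 1)) := by
  classical
  -- second derivative symmetry
  have hφ1 : ∀ y, HasFDerivAt φ (fderiv ℝ φ y) y :=
    fun y => (hsm.differentiable (by simp) y).hasFDerivAt
  have hφ' : ContDiff ℝ (⊤ : ℕ∞) (fderiv ℝ φ) := hsm.fderiv_right (by simp)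
  have hf'' : HasFDerivAt (fderiv ℝ φ) (fderiv ℝ (fderiv ℝ φ) x) x :=
    (hφ'.differentiable (by simp) x).hasFDerivAt
  have hsymm2 : ∀ v w, fderiv ℝ (fderiv ℝ φ) x v w = fderiv ℝ (fderiv ℝ φ) x w v :=
    second_derivative_symmetric hφ1 hf''
  have hcomp := (InnerProductSpace.toDual ℝ (EuclideanSpace ℝ (Fin n))).symm.comp_fderiv
      (f := fderiv ℝ φ) (x := x)
  have hgradφ : gradient φ =
      (⇑(InnerProductSpace.toDual ℝ (EuclideanSpace ℝ (Fin n))).symm ∘ fderiv ℝ φ) := rfl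
  have hgrad : ∀ w, fderiv ℝ (gradient φ) x w =
      (InnerProductSpace.toDual ℝ (EuclideanSpace ℝ (Fin n))).symm
        (fderiv ℝ (fderiv ℝ φ) x w) := by
    intro w
    rw [hgradφ, hcomp]
    rfl
  have coord : ∀ (v : EuclideanSpace ℝ (Fin n)) (i : Fin n),
      (inner ℝ v (EuclideanSpace.single i (1 : ℝ)) : ℝ) = v i := by
    intro v i
    rw [EuclideanSpace.inner_single_right]
    simp
  have hHsec : ∀ i j, H i j =
      fderiv ℝ (fderiv ℝ φ) x (EuclideanSpace.single j 1) (EuclideanSpace.single i 1) := by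
    intro i j
    rw [hH i j]
    rw [← coord (fderiv ℝ (gradient φ) x (EuclideanSpace.single j 1)) i, hgrad,
      InnerProductSpace.toDual_symm_apply]
  have hHsymm : ∀ i j, H i j = H j i := by
    intro i j
    rw [hHsec i j, hHsec j i, hsymm2]
  -- det H equals the linear map determinant
  set d : ℝ := LinearMap.det (fderiv ℝ (gradient φ) x).toLinearMap with hd_def
  have hd : 0 < d := hdet x
  have hHdet : H.det = d := by
    have hb : H = LinearMap.toMatrix (EuclideanSpace.basisFun (Fin n) ℝ).toBasis
        (EuclideanSpace.basisFun (Fin n) ℝ).toBasis (fderiv ℝ (gradient φ) x).toLinearMap := by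
      ext i j
      rw [LinearMap.toMatrix_apply, hH i j]
      simp [EuclideanSpace.basisFun_apply, OrthonormalBasis.coe_toBasis,
        OrthonormalBasis.coe_toBasis_repr_apply, EuclideanSpace.basisFun_repr]
    rw [hb, LinearMap.det_toMatrix]
  have hHunit : IsUnit H.det := isUnit_iff_ne_zero.mpr (by rw [hHdet]; exact hd.ne')
  have : Invertible H := H.invertibleOfIsUnitDet hHunit
  -- block decomposition
  set u : Matrix (Fin n) Unit ℝ := fun i _ => -(gradient ψ x i) with hu
  set v : Matrix Unit (Fin n) ℝ := fun _ j => ∑ k, H j k * x k with hv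
  set a : Matrix Unit Unit ℝ := fun _ _ => -((inner ℝ x (gradient ψ x) : ℝ) - ψ x) with ha
  have hMeq : M = Matrix.fromBlocks H u v a := by
    ext i j
    rcases i with i | ⟨⟩ <;> rcases j with j | ⟨⟩ <;>
      simp [Matrix.fromBlocks, hM1, hM2, hM3, hM4, hu, hv, ha]
  set r : Matrix Unit (Fin n) ℝ := fun _ k => x k with hr
  have hvr : v = r * H := by
    ext _ j
    simp only [hv, hr, Matrix.mul_apply]
    exact Finset.sum_congr rfl fun k _ => by rw [hHsymm j k, mul_comm]
  have hschur : a - v * ⅟H * u = fun _ _ => ψ x := by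
    have hri : v * ⅟H = r := by
      rw [hvr, Matrix.mul_assoc, mul_invOf_self, Matrix.mul_one]
    rw [hri]
    ext _ _
    simp only [ha, hr, hu, Matrix.sub_apply, Matrix.mul_apply]
    have hinner : (inner ℝ x (gradient ψ x) : ℝ) = ∑ k, x k * gradient ψ x k := by
      rw [PiLp.inner_apply]
      exact Finset.sum_congr rfl fun k _ => by simp [RCLike.inner_apply, mul_comm]
    rw [hinner]
    change -(∑ k, x k * gradient ψ x k - ψ x) - ∑ k, x k * -(gradient ψ x k) = ψ x
    simp [mul_neg, Finset.sum_neg_distrib]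
  have hdetM : M.det = d * ψ x := by
    rw [hMeq, Matrix.det_fromBlocks₁₁, hschur, hHdet]
    congr 1
    exact Matrix.det_unique _
  -- final rpow computation
  rw [hdetM, hψ x, ← hd_def]
  have hn2 : ((n : ℝ) + 2) ≠ 0 := by positivity
  have e1 : (1 : ℝ) + -(1 : ℝ) / ((n : ℝ) + 2) = ((n : ℝ) + 1) / ((n : ℝ) + 2) := by
    field_simp
    ring
  have e2 : (-(1 : ℝ) / ((n : ℝ) + 2)) * (-((n : ℝ) + 1)) = ((n : ℝ) + 1) / ((n : ℝ) + 2) := by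
    field_simp
  rw [← Real.rpow_mul hd.le, e2, ← e1, Real.rpow_add hd, Real.rpow_one]
end
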